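/- arXiv:1711.06462 — 7 statements merged into one kernel-verified Lean document; each statement's English description precedes it below -/
import Mathlib

section
/- Let M be an n×n matrix over a field F, let G and H be invertible upper triangular n×n matrices, and define a pivot of a matrix N to be a pair (i,j) such that N_{i,j} ≠ 0 and N_{k,l} = 0 whenever k ≥ i, l ≥ j, and (k,l) ≠ (i,j). Then every pivot of M is a pivot of G·M·Hᵀ. -/
/-!
Left multiplication by an invertible upper triangular `G` replaces each row `k` by a combination
of the rows `a ≥ k` in which row `k` has a nonzero coefficient. In the quadrant weakly above and to
the right of a pivot `(i, j)` only row `i` of `M` is nonzero, so the pivot survives. Right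
multiplication by `Hᵀ` is the same operation on the transpose, which swaps the coordinates.
-/

open Matrix

namespace SchubertCell

/-- The strict down-set of a subset of a poset. -/
def Down {X : Type*} [Preorder X] (Y : Set X) : Set X := {x | ∃ y ∈ Y, x < y}

variable {F : Type*} [Field F] {n : ℕ}

/-- The pivot-set of a matrix: the maximal elements of the support
under the componentwise (product) order on indices. -/
def Piv (M : Matrix (Fin n) (Fin n) F) : Set (Fin n × Fin n) :=
  {p | M p.1 p.2 ≠ 0 ∧ ∀ q : Fin n × Fin n, p < q → M q.1 q.2 = 0}

/-- Upper triangular matrix. -/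
def UpperTri (G : Matrix (Fin n) (Fin n) F) : Prop := ∀ i j : Fin n, j < i → G i j = 0

/-- `M i j` is the last (largest row index) nonzero entry of column `j`. -/
def IsLast (M : Matrix (Fin n) (Fin n) F) (i j : Fin n) : Prop :=
  M i j ≠ 0 ∧ ∀ i' : Fin n, i < i' → M i' j = 0

/-- Reduced reverse column echelon form: (CE1), (CE2), (CE3). -/
def IsRRCEF (M : Matrix (Fin n) (Fin n) F) : Prop :=
  (∀ j j' : Fin n, j ≤ j' → (∃ i, M i j' ≠ 0) → ∃ i, M i j ≠ 0) ∧
  (∀ i j i' j' : Fin n, IsLast M i j → IsLast M i' j' → j < j' → i' < i) ∧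
  (∀ i j : Fin n, IsLast M i j → M i j = 1 ∧ ∀ j' : Fin n, j' ≠ j → M i j' = 0)

/-- `D(α)`: elements of the strict down-set of `α` whose row contains no element of `α`. -/
def DSet (α : Set (Fin n × Fin n)) : Set (Fin n × Fin n) :=
  {p | p ∈ Down α ∧ ∀ k : Fin n, (p.1, k) ∉ α}

theorem UpperTri.isUpperTriangular {G : Matrix (Fin n) (Fin n) F} (hG : UpperTri G) :
    G.IsUpperTriangular :=
  fun i j h => hG i j h

theorem UpperTri.diag_ne_zero_of_isUnit {G : Matrix (Fin n) (Fin n) F} (hGt : UpperTri G)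
    (hG : IsUnit G) (k : Fin n) : G k k ≠ 0 := by
  have hdet : G.det ≠ 0 := ((isUnit_iff_isUnit_det G).mp hG).ne_zero
  rw [det_of_isUpperTriangular hGt.isUpperTriangular] at hdet
  exact fun hk => hdet (Finset.prod_eq_zero (Finset.mem_univ k) hk)

theorem mem_piv_transpose_iff {M : Matrix (Fin n) (Fin n) F} {p : Fin n × Fin n} :
    p ∈ Piv Mᵀ ↔ p.swap ∈ Piv M :=
  and_congr Iff.rfl ⟨fun h q hq => h q.swap (Prod.swap_lt_mk.mp hq),
    fun h q hq => h q.swap (Prod.swap_lt_swap.mpr hq)⟩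

theorem mul_apply_of_mem_piv {M G : Matrix (Fin n) (Fin n) F} (hGt : UpperTri G)
    {i j : Fin n} (hp : (i, j) ∈ Piv M) {k l : Fin n} (hk : i ≤ k) (hl : j ≤ l) :
    (G * M) k l = G k i * M i l := by
  rw [mul_apply, Fintype.sum_eq_single i]
  intro a hai
  -- rows `a < k` are killed by `G`, rows `a ≥ k` other than `i` by the maximality of `(i, j)`
  rcases lt_or_ge a k with hak | hka
  · rw [hGt k a hak, zero_mul]
  · have hlt : (i, j) < (a, l) :=
      Prod.lt_iff.mpr (Or.inl ⟨lt_of_le_of_ne (hk.trans hka) (Ne.symm hai), hl⟩)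
    rw [hp.2 _ hlt, mul_zero]

theorem piv_subset_piv_mul_of_upperTri {M G : Matrix (Fin n) (Fin n) F} (hGt : UpperTri G)
    (hdiag : ∀ k, G k k ≠ 0) : Piv M ⊆ Piv (G * M) := by
  rintro ⟨i, j⟩ hp
  refine ⟨?_, fun ⟨k, l⟩ hlt => ?_⟩
  · rw [mul_apply_of_mem_piv hGt hp le_rfl le_rfl]
    exact mul_ne_zero (hdiag i) hp.1
  · rw [mul_apply_of_mem_piv hGt hp hlt.le.1 hlt.le.2]
    rcases Prod.lt_iff.mp hlt with ⟨hik, -⟩ | ⟨-, hjl⟩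
    · rw [hGt k i hik, zero_mul]
    · rw [hp.2 (i, l) (Prod.mk_lt_mk_iff_right.mpr hjl), mul_zero]

theorem pivot_subset_of_triangular_action {F : Type*} [Field F] {n : ℕ}
    (M G H : Matrix (Fin n) (Fin n) F)
    (hG : IsUnit G) (hH : IsUnit H) (hGt : UpperTri G) (hHt : UpperTri H) :
    Piv M ⊆ Piv (G * M * Hᵀ) := by
  intro p hp
  have hGM : p ∈ Piv (G * M) :=
    piv_subset_piv_mul_of_upperTri hGt (hGt.diag_ne_zero_of_isUnit hG) hp
  have hHGM : p.swap ∈ Piv (H * (G * M)ᵀ) :=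
    piv_subset_piv_mul_of_upperTri hHt (hHt.diag_ne_zero_of_isUnit hH)
      (mem_piv_transpose_iff.mpr hGM)
  rw [← transpose_transpose (G * M * Hᵀ), transpose_mul, transpose_transpose]
  exact mem_piv_transpose_iff.mpr hHGM
end SchubertCell
end

section
/- The map sending an n×n matrix over a field F in reduced reverse column echelon form to its column space is a bijection onto the set of all linear subspaces of Fⁿ. -/
/-!
The column space `W` of a reduced reverse column echelon matrix determines the matrix. The
pivot rows are exactly the leading indices (largest nonzero coordinates) of the nonzero vectors
of `W`, the column with pivot row `i` is the unique vector of `W` that is `1` at `i`, vanishes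
above `i` and at every other leading index, and (CE1), (CE2) force the nonzero columns to come
first, ordered by decreasing pivot row. Conversely, listing these reduced vectors in this order
gives a matrix in reduced reverse column echelon form whose columns span `W`, since every
`w ∈ W` equals `∑ₖ w k • vₖ` over the leading indices `k`.
-/

open Matrix

namespace SchubertCell

variable {F : Type*} [Field F] {n : ℕ}

section Lead

variable {ι R : Type*} [LinearOrder ι] [Zero R]

def IsLead (v : ι → R) (i : ι) : Prop :=
  v i ≠ 0 ∧ ∀ j, i < j → v j = 0

theorem IsLead.unique {v : ι → R} {i i' : ι} (h : IsLead v i) (h' : IsLead v i') : i = i' := by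
  by_contra hne
  rcases lt_or_gt_of_ne hne with hlt | hlt
  · exact h'.1 (h.2 i' hlt)
  · exact h.1 (h'.2 i hlt)

theorem exists_isLead [Finite ι] {v : ι → R} (hv : v ≠ 0) : ∃ i, IsLead v i := by
  have : Fintype ι := Fintype.ofFinite ι
  classical
  obtain ⟨i, hi⟩ := Function.ne_iff.1 hv
  obtain ⟨i₀, hi₀, hmax⟩ :=
    Finset.exists_max_image (Finset.univ.filter fun j => v j ≠ 0) id ⟨i, by simpa using hi⟩
  refine ⟨i₀, (Finset.mem_filter.1 hi₀).2, fun j hj => ?_⟩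
  by_contra hvj
  exact (hmax j (by simpa using hvj)).not_gt hj

end Lead

theorem isLast_iff_isLead {M : Matrix (Fin n) (Fin n) F} {i j : Fin n} :
    IsLast M i j ↔ IsLead (fun r => M r j) i := Iff.rfl

section LeadSet

variable {ι : Type*} [LinearOrder ι] [Fintype ι] (W : Submodule F (ι → F))

open Classical in
noncomputable def leadSet : Finset ι := Finset.univ.filter fun i => ∃ v ∈ W, IsLead v i

variable {W}

theorem mem_leadSet {i : ι} : i ∈ leadSet W ↔ ∃ v ∈ W, IsLead v i := by
  simp [leadSet]

theorem eq_zero_of_forall_mem_leadSet {v : ι → F} (hv : v ∈ W)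
    (h : ∀ k ∈ leadSet W, v k = 0) : v = 0 := by
  by_contra hne
  obtain ⟨i, hi⟩ := exists_isLead hne
  exact hi.1 (h i (mem_leadSet.2 ⟨v, hv, hi⟩))

variable (W) in
structure IsReducedVector (i : ι) (v : ι → F) : Prop where
  mem : v ∈ W
  apply_self : v i = 1
  apply_of_lt : ∀ j, i < j → v j = 0
  apply_of_mem_leadSet : ∀ k ∈ leadSet W, k ≠ i → v k = 0

theorem IsReducedVector.unique {i : ι} {v v' : ι → F} (h : IsReducedVector W i v)
    (h' : IsReducedVector W i v') : v = v' := by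
  refine sub_eq_zero.1 (eq_zero_of_forall_mem_leadSet (W.sub_mem h.mem h'.mem) fun k hk => ?_)
  by_cases hki : k = i
  · simp [hki, h.apply_self, h'.apply_self]
  · simp [h.apply_of_mem_leadSet k hk hki, h'.apply_of_mem_leadSet k hk hki]

/-- Gaussian elimination: scale a vector with leading index `i`, then clear its entries at the
smaller leading indices using the reduced vectors there. -/
theorem exists_isReducedVector {i : ι} (hi : i ∈ leadSet W) : ∃ v, IsReducedVector W i v := by
  induction i using WellFoundedLT.induction with
  | ind i ih =>
  obtain ⟨v₀, hv₀, hlead⟩ := mem_leadSet.1 hi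
  choose! u hu using ih
  classical
  set s := (leadSet W).filter (· < i)
  have hus : ∀ k ∈ s, IsReducedVector W k (u k) := fun k hk =>
    hu k (Finset.mem_filter.1 hk).2 (Finset.mem_filter.1 hk).1
  set v₁ := (v₀ i)⁻¹ • v₀
  have hv₁ : ∀ j, i < j → v₁ j = 0 := fun j hj => by simp [v₁, hlead.2 j hj]
  have happly (j) :
      (v₁ - ∑ k ∈ s, v₁ k • u k) j = v₁ j - ∑ k ∈ s, v₁ k * u k j := by
    simp [Finset.sum_apply]
  have habove : ∀ j, i ≤ j → ∀ k ∈ s, u k j = 0 := fun j hj k hk =>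
    (hus k hk).apply_of_lt j (lt_of_lt_of_le (Finset.mem_filter.1 hk).2 hj)
  refine ⟨v₁ - ∑ k ∈ s, v₁ k • u k, ?_, ?_, fun j hj => ?_, fun k hk hki => ?_⟩
  · exact W.sub_mem (W.smul_mem _ hv₀) (W.sum_mem fun k hk => W.smul_mem _ (hus k hk).mem)
  · rw [happly, Finset.sum_eq_zero fun k hk => by rw [habove i le_rfl k hk, mul_zero]]
    simp [v₁, hlead.1]
  · rw [happly, hv₁ j hj, Finset.sum_eq_zero fun k hk => by rw [habove j hj.le k hk, mul_zero]]
    simp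
  · rcases lt_or_gt_of_ne hki with hlt | hgt
    · have hks : k ∈ s := Finset.mem_filter.2 ⟨hk, hlt⟩
      rw [happly, Finset.sum_eq_single_of_mem k hks fun k' hk' hne => by
        rw [(hus k' hk').apply_of_mem_leadSet k hk hne.symm, mul_zero]]
      rw [(hus k hks).apply_self, mul_one, sub_self]
    · rw [happly, hv₁ k hgt, Finset.sum_eq_zero fun k' hk' => by rw [habove k hgt.le k' hk',
        mul_zero], sub_zero]

open Classical in
variable (W) in
noncomputable def reducedVector (i : ι) : ι → F :=
  if h : i ∈ leadSet W then (exists_isReducedVector h).choose else 0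

theorem isReducedVector_reducedVector {i : ι} (h : i ∈ leadSet W) :
    IsReducedVector W i (reducedVector W i) := by
  rw [reducedVector, dif_pos h]
  exact (exists_isReducedVector h).choose_spec

theorem eq_sum_reducedVector {w : ι → F} (hw : w ∈ W) :
    w = ∑ k ∈ leadSet W, w k • reducedVector W k := by
  have hred := fun k (hk : k ∈ leadSet W) => isReducedVector_reducedVector hk
  refine sub_eq_zero.1 (eq_zero_of_forall_mem_leadSet
    (W.sub_mem hw (W.sum_mem fun k hk => W.smul_mem _ (hred k hk).mem)) fun k hk => ?_)
  rw [Pi.sub_apply, Finset.sum_apply, Finset.sum_eq_single_of_mem k hk fun k' hk' hne => by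
    rw [Pi.smul_apply, (hred k' hk').apply_of_mem_leadSet k hk hne.symm, smul_zero]]
  simp [(hred k hk).apply_self]

end LeadSet

theorem _root_.Finset.exists_card_eq_and_eq_orderEmbOfFin_rev {α : Type*} [LinearOrder α]
    {s : Finset α} {m : ℕ} {f : Fin m → α} (hf : StrictAnti f) (hrange : Set.range f = s) :
    ∃ h : s.card = m, ∀ k, f k = s.orderEmbOfFin h k.rev := by
  have hs : s = Finset.univ.image f := Finset.coe_injective (by simp [← hrange])
  have hcard : s.card = m := by
    rw [hs, Finset.card_image_of_injective _ hf.injective, Finset.card_univ, Fintype.card_fin]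
  have hmono : StrictMono (f ∘ Fin.rev) := hf.comp Fin.rev_strictAnti
  have hunique := Finset.orderEmbOfFin_unique hcard
    (fun k => by simp [← Finset.mem_coe, ← hrange]) hmono
  exact ⟨hcard, fun k => by rw [← hunique, Function.comp_apply, Fin.rev_rev]⟩

def colSpace (M : Matrix (Fin n) (Fin n) F) : Submodule F (Fin n → F) :=
  Submodule.span F (Set.range fun j i => M i j)

theorem col_mem_colSpace (M : Matrix (Fin n) (Fin n) F) (j : Fin n) :
    (fun i => M i j) ∈ colSpace M :=
  Submodule.subset_span ⟨j, rfl⟩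

section Canonical

variable (W : Submodule F (Fin n → F))

/-- The `k`-th largest leading index of `W`, counting from `0`. -/
noncomputable def pivotRow (k : Fin (leadSet W).card) : Fin n :=
  (leadSet W).orderEmbOfFin rfl k.rev

theorem pivotRow_strictAnti : StrictAnti (pivotRow W) :=
  ((leadSet W).orderEmbOfFin rfl).strictMono.comp_strictAnti Fin.rev_strictAnti

theorem pivotRow_mem (k : Fin (leadSet W).card) : pivotRow W k ∈ leadSet W :=
  Finset.orderEmbOfFin_mem _ _ _

theorem range_pivotRow : Set.range (pivotRow W) = leadSet W := by
  rw [← Finset.range_orderEmbOfFin (leadSet W) rfl]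
  exact (Fin.revPerm.surjective.range_comp _)

noncomputable def canonicalMatrix : Matrix (Fin n) (Fin n) F := fun i j =>
  if h : j.val < (leadSet W).card then reducedVector W (pivotRow W ⟨j, h⟩) i else 0

variable {W}

theorem isReducedVector_canonicalMatrix_col {j : Fin n} (h : j.val < (leadSet W).card) :
    IsReducedVector W (pivotRow W ⟨j, h⟩) fun i => canonicalMatrix W i j := by
  simpa [canonicalMatrix, h] using
    isReducedVector_reducedVector (pivotRow_mem W _)

theorem canonicalMatrix_col_eq_zero {j : Fin n} (h : ¬ j.val < (leadSet W).card) (i : Fin n) :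
    canonicalMatrix W i j = 0 := dif_neg h

theorem isLast_canonicalMatrix_iff {i j : Fin n} :
    IsLast (canonicalMatrix W) i j ↔
      ∃ h : j.val < (leadSet W).card, i = pivotRow W ⟨j, h⟩ := by
  constructor
  · intro hl
    by_cases h : j.val < (leadSet W).card
    · have hred := isReducedVector_canonicalMatrix_col h
      exact ⟨h, (isLast_iff_isLead.1 hl).unique ⟨by simp [hred.apply_self],
        hred.apply_of_lt⟩⟩
    · exact absurd (canonicalMatrix_col_eq_zero h i) hl.1
  · rintro ⟨h, rfl⟩
    have hred := isReducedVector_canonicalMatrix_col h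
    exact ⟨by simp [hred.apply_self], hred.apply_of_lt⟩

theorem canonicalMatrix_isRRCEF : IsRRCEF (canonicalMatrix W) := by
  refine ⟨fun j j' hle ⟨i, hi⟩ => ?_, fun i j i' j' hl hl' hjj' => ?_, fun i j hl => ?_⟩
  · have hj' : j'.val < (leadSet W).card := by
      by_contra h
      exact hi (canonicalMatrix_col_eq_zero h i)
    have hj : j.val < (leadSet W).card := lt_of_le_of_lt hle hj'
    exact ⟨_, (isLast_canonicalMatrix_iff.2 ⟨hj, rfl⟩).1⟩
  · obtain ⟨h, rfl⟩ := isLast_canonicalMatrix_iff.1 hl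
    obtain ⟨h', rfl⟩ := isLast_canonicalMatrix_iff.1 hl'
    exact pivotRow_strictAnti W hjj'
  · obtain ⟨h, rfl⟩ := isLast_canonicalMatrix_iff.1 hl
    refine ⟨(isReducedVector_canonicalMatrix_col h).apply_self, fun j' hne => ?_⟩
    by_cases h' : j'.val < (leadSet W).card
    · refine (isReducedVector_canonicalMatrix_col h').apply_of_mem_leadSet _ ?_ ?_
      · exact pivotRow_mem W _
      · refine (pivotRow_strictAnti W).injective.ne fun heq => hne (Fin.ext ?_)
        simpa using heq.symm
    · exact canonicalMatrix_col_eq_zero h' _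

theorem colSpace_canonicalMatrix : colSpace (canonicalMatrix W) = W := by
  apply le_antisymm
  · refine Submodule.span_le.2 ?_
    rintro _ ⟨j, rfl⟩
    change (fun i => canonicalMatrix W i j) ∈ W
    by_cases h : j.val < (leadSet W).card
    · exact (isReducedVector_canonicalMatrix_col h).mem
    · rw [show (fun i => canonicalMatrix W i j) = 0 from funext (canonicalMatrix_col_eq_zero h)]
      exact W.zero_mem
  · intro w hw
    rw [eq_sum_reducedVector hw]
    refine Submodule.sum_mem _ fun k hk => Submodule.smul_mem _ _ ?_
    obtain ⟨⟨j, hj⟩, rfl⟩ : k ∈ Set.range (pivotRow W) := by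
      simpa [range_pivotRow] using hk
    have hjn : j < n := hj.trans_le ((leadSet W).card_le_univ.trans_eq (Fintype.card_fin n))
    refine Submodule.subset_span ⟨⟨j, hjn⟩, ?_⟩
    funext i
    simp [canonicalMatrix, hj]

end Canonical

theorem _root_.Fin.exists_mem_iff_val_lt_of_isLowerSet {s : Set (Fin n)} (hs : IsLowerSet s) :
    ∃ m ≤ n, ∀ j : Fin n, j ∈ s ↔ j.val < m := by
  rcases hs.eq_univ_or_Iio with rfl | ⟨a, rfl⟩
  · exact ⟨n, le_rfl, fun j => by simp [j.isLt]⟩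
  · exact ⟨a, a.isLt.le, fun j => by simp⟩

namespace IsRRCEF

variable {M : Matrix (Fin n) (Fin n) F} (hM : IsRRCEF M)
include hM

/-- By (CE3) a combination `∑ j, c j • col j` takes the value `c j` at the pivot row of column
`j`. Some column `j` with `c j ≠ 0` is nonzero at the leading index `i`, so its pivot row is
`≥ i`, and it is `≤ i` because the combination does not vanish there. -/
theorem exists_isLast_of_isLead {v : Fin n → F} (hv : v ∈ colSpace M) {i : Fin n}
    (hi : IsLead v i) : ∃ j, IsLast M i j := by
  obtain ⟨c, rfl⟩ := (Submodule.mem_span_range_iff_exists_fun F).1 hv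
  have happly : ∀ r, (∑ j, c j • fun i => M i j) r = ∑ j, c j * M r j := fun r => by
    simp [Finset.sum_apply]
  have hcoef : ∀ r j, IsLast M r j → (∑ j, c j • fun i => M i j) r = c j := fun r j hl => by
    rw [happly, Finset.sum_eq_single_of_mem j (Finset.mem_univ j) fun j' _ hne => by
      rw [(hM.2.2 r j hl).2 j' hne, mul_zero], (hM.2.2 r j hl).1, mul_one]
  obtain ⟨j, -, hj⟩ := Finset.exists_ne_zero_of_sum_ne_zero (happly i ▸ hi.1)
  obtain ⟨hcj, hMij⟩ := mul_ne_zero_iff.1 hj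
  obtain ⟨i', hi'⟩ := exists_isLead (v := fun r => M r j) (Function.ne_iff.2 ⟨i, hMij⟩)
  have hle : i ≤ i' := not_lt.1 fun h => hMij (hi'.2 i h)
  have hge : i' ≤ i := not_lt.1 fun h => (hcoef i' j hi' ▸ hcj) (hi.2 i' h)
  exact ⟨j, le_antisymm hle hge ▸ hi'⟩

theorem isReducedVector_col {i j : Fin n} (hl : IsLast M i j) :
    IsReducedVector (colSpace M) i fun r => M r j where
  mem := col_mem_colSpace M j
  apply_self := (hM.2.2 i j hl).1
  apply_of_lt := hl.2
  apply_of_mem_leadSet k hk hki := by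
    obtain ⟨v, hv, hlead⟩ := mem_leadSet.1 hk
    obtain ⟨j', hj'⟩ := hM.exists_isLast_of_isLead hv hlead
    refine (hM.2.2 k j' hj').2 j fun hjj' => hki ?_
    exact (isLast_iff_isLead.1 hj').unique (hjj' ▸ hl)

theorem exists_pivots : ∃ (m : ℕ) (hm : m ≤ n) (p : Fin m → Fin n), StrictAnti p ∧
    (∀ k, IsLast M (p k) (Fin.castLE hm k)) ∧
    ∀ j : Fin n, m ≤ j.val → ∀ i, M i j = 0 := by
  obtain ⟨m, hm, hcols⟩ := Fin.exists_mem_iff_val_lt_of_isLowerSet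
    (s := {j | ∃ i, M i j ≠ 0}) fun _ _ hle h => hM.1 _ _ hle h
  have hpiv : ∀ k : Fin m, ∃ i, IsLast M i (Fin.castLE hm k) := fun k =>
    exists_isLead (Function.ne_iff.2 ((hcols _).2 k.isLt))
  choose p hp using hpiv
  refine ⟨m, hm, p, fun a b hab => hM.2.1 _ _ _ _ (hp a) (hp b) hab, hp, fun j hj i => ?_⟩
  by_contra h
  exact absurd ((hcols j).1 ⟨i, h⟩) (not_lt.2 hj)

theorem canonicalMatrix_colSpace : canonicalMatrix (colSpace M) = M := by
  obtain ⟨m, hm, p, hanti, hlast, hzero⟩ := hM.exists_pivots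
  have hrange : Set.range p = leadSet (colSpace M) := by
    ext i
    simp only [Set.mem_range, Finset.mem_coe, mem_leadSet]
    constructor
    · rintro ⟨k, rfl⟩
      exact ⟨_, col_mem_colSpace M _, hlast k⟩
    · rintro ⟨v, hv, hi⟩
      obtain ⟨j, hj⟩ := hM.exists_isLast_of_isLead hv hi
      have hjm : j.val < m := not_le.1 fun h => hj.1 (hzero j h i)
      exact ⟨⟨j, hjm⟩, (isLast_iff_isLead.1 (hlast _)).unique hj⟩
  obtain ⟨rfl, hp⟩ := Finset.exists_card_eq_and_eq_orderEmbOfFin_rev hanti hrange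
  ext i j
  by_cases hj : j.val < (leadSet (colSpace M)).card
  · have hcol := (isReducedVector_canonicalMatrix_col hj).unique
      (hp ⟨j, hj⟩ ▸ hM.isReducedVector_col (hlast _))
    exact congrFun hcol i
  · rw [canonicalMatrix_col_eq_zero hj, hzero j (not_lt.1 hj)]

end IsRRCEF

theorem rrcef_columnSpace_bijective (F : Type*) [Field F] (n : ℕ) :
    Function.Bijective
      (fun M : {M : Matrix (Fin n) (Fin n) F // IsRRCEF M} =>
        Submodule.span F (Set.range fun j : Fin n => fun i : Fin n => M.val i j)) :=
  Function.bijective_iff_has_inverse.2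
    ⟨fun W => ⟨canonicalMatrix W, canonicalMatrix_isRRCEF⟩,
      fun M => Subtype.ext M.2.canonicalMatrix_colSpace, fun _ => colSpace_canonicalMatrix⟩

end SchubertCell
end

section
/- Let M, N be n×n matrices over a field F, both in reduced reverse column echelon form. Then there exist invertible upper triangular matrices G, H with M = G·N·Hᵀ if and only if Piv(M) = Piv(N). -/
open Matrix

namespace SchubertCell

variable {F : Type*} [Field F] {n : ℕ}

/-!
Multiplying by invertible upper triangular matrices on both sides can only move a nonzero entry
weakly down and to the right, and the inverses are again upper triangular, so the supports of `M`
and `N` dominate each other and have the same maximal elements.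

Conversely, for a matrix in reduced reverse column echelon form the pivots are exactly the last
nonzero entries of the columns, and the row of a pivot is a unit row. If `Piv M = Piv N`, then
`M` and `N` can only differ strictly above the pivots, and row operations adding multiples of
the pivot rows to the rows above them turn `N` into `M`: with `P` the indicator matrix of the
pivots, `G = 1 + (M - N) Pᵀ` is unitriangular and `G N = M`.
-/

theorem upperTri_one : UpperTri (1 : Matrix (Fin n) (Fin n) F) :=
  fun _ _ h => one_apply_ne h.ne'

theorem UpperTri.inv {G : Matrix (Fin n) (Fin n) F} (hG : UpperTri G) (hGu : IsUnit G) :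
    UpperTri G⁻¹ := by
  obtain ⟨_⟩ := hGu.nonempty_invertible
  exact fun _ _ h => blockTriangular_inv_of_blockTriangular hG h

def StrictUpperTri (A : Matrix (Fin n) (Fin n) F) : Prop := ∀ i j : Fin n, j ≤ i → A i j = 0

theorem StrictUpperTri.upperTri_one_add {A : Matrix (Fin n) (Fin n) F} (hA : StrictUpperTri A) :
    UpperTri (1 + A) := fun i j h => by
  rw [Matrix.add_apply, one_apply_ne h.ne', hA i j h.le, add_zero]

theorem StrictUpperTri.isUnit_one_add {A : Matrix (Fin n) (Fin n) F} (hA : StrictUpperTri A) :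
    IsUnit (1 + A) := by
  rw [isUnit_iff_isUnit_det, det_of_isUpperTriangular hA.upperTri_one_add]
  simp [hA _ _ le_rfl]

section Support

variable {M N : Matrix (Fin n) (Fin n) F}

theorem exists_le_apply_ne_zero_of_mul_apply_ne_zero {G H : Matrix (Fin n) (Fin n) F}
    (hG : UpperTri G) (hH : UpperTri H) {p : Fin n × Fin n} (hp : (G * N * Hᵀ) p.1 p.2 ≠ 0) :
    ∃ q, p ≤ q ∧ N q.1 q.2 ≠ 0 := by
  by_contra! hzero
  apply hp
  rw [mul_apply]
  refine Finset.sum_eq_zero fun l _ => ?_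
  rcases lt_or_ge l p.2 with hl | hl
  · rw [transpose_apply, hH _ _ hl, mul_zero]
  · rw [mul_apply, Finset.sum_eq_zero fun k _ => ?_, zero_mul]
    rcases lt_or_ge k p.1 with hk | hk
    · rw [hG _ _ hk, zero_mul]
    · rw [hzero (k, l) (Prod.mk_le_mk.mpr ⟨hk, hl⟩), mul_zero]

theorem piv_subset_of_exists_le
    (hMN : ∀ p : Fin n × Fin n, M p.1 p.2 ≠ 0 → ∃ q, p ≤ q ∧ N q.1 q.2 ≠ 0)
    (hNM : ∀ p : Fin n × Fin n, N p.1 p.2 ≠ 0 → ∃ q, p ≤ q ∧ M q.1 q.2 ≠ 0) : Piv M ⊆ Piv N := by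
  intro p ⟨hp, hmax⟩
  have hmaxN : ∀ q, p < q → N q.1 q.2 = 0 := fun q hpq => by
    by_contra hq
    obtain ⟨r, hqr, hr⟩ := hNM q hq
    exact hr (hmax r (hpq.trans_le hqr))
  obtain ⟨q, hpq, hq⟩ := hMN p hp
  obtain rfl : p = q := by_contra fun hne => hq (hmaxN q (hpq.lt_of_ne hne))
  exact ⟨hq, hmaxN⟩

theorem piv_eq_of_eq_mul {G H : Matrix (Fin n) (Fin n) F} (hGu : IsUnit G) (hHu : IsUnit H)
    (hG : UpperTri G) (hH : UpperTri H) (h : M = G * N * Hᵀ) : Piv M = Piv N := by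
  have hN : N = G⁻¹ * M * H⁻¹ᵀ := by
    rw [h, transpose_nonsing_inv, Matrix.mul_assoc G,
      nonsing_inv_mul_cancel_left _ _ ((isUnit_iff_isUnit_det G).mp hGu),
      mul_nonsing_inv_cancel_right _ _ (by simpa using (isUnit_iff_isUnit_det H).mp hHu)]
  have hMN (p : Fin n × Fin n) (hp : M p.1 p.2 ≠ 0) : ∃ q, p ≤ q ∧ N q.1 q.2 ≠ 0 :=
    exists_le_apply_ne_zero_of_mul_apply_ne_zero hG hH (h ▸ hp)
  have hNM (p : Fin n × Fin n) (hp : N p.1 p.2 ≠ 0) : ∃ q, p ≤ q ∧ M q.1 q.2 ≠ 0 :=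
    exists_le_apply_ne_zero_of_mul_apply_ne_zero (hG.inv hGu) (hH.inv hHu) (hN ▸ hp)
  exact (piv_subset_of_exists_le hMN hNM).antisymm (piv_subset_of_exists_le hNM hMN)

end Support

section Pivots

variable {M N : Matrix (Fin n) (Fin n) F}

theorem isLast_of_mem_piv {i j : Fin n} (h : (i, j) ∈ Piv M) : IsLast M i j :=
  ⟨h.1, fun _ hi => h.2 _ (Prod.mk_lt_mk_iff_left.mpr hi)⟩

theorem eq_of_mem_piv_of_mem_piv {k k' j : Fin n} (h : (k, j) ∈ Piv M) (h' : (k', j) ∈ Piv M) :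
    k = k' := by
  by_contra hne
  rcases lt_or_gt_of_ne hne with hlt | hlt
  · exact h'.1 ((isLast_of_mem_piv h).2 k' hlt)
  · exact h.1 ((isLast_of_mem_piv h').2 k hlt)

theorem exists_isLast_of_ne_zero {i j : Fin n} (h : M i j ≠ 0) : ∃ k, i ≤ k ∧ IsLast M k j := by
  classical
  obtain ⟨k, hk, hmax⟩ :=
    (Finset.univ.filter (M · j ≠ 0)).exists_max_image id ⟨i, by simpa using h⟩
  simp only [Finset.mem_filter, Finset.mem_univ, true_and, id] at hk hmax
  exact ⟨k, hmax i h, hk, fun i' hi' => by_contra fun h' => (hmax i' h').not_gt hi'⟩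

theorem IsRRCEF.mem_piv_of_isLast (hM : IsRRCEF M) {i j : Fin n} (h : IsLast M i j) :
    (i, j) ∈ Piv M := by
  refine ⟨h.1, fun ⟨i', j'⟩ hq => ?_⟩
  obtain ⟨hii', hjj'⟩ := Prod.mk_le_mk.mp hq.le
  rcases hjj'.lt_or_eq with hj | rfl
  · by_contra h0
    obtain ⟨k, hik, hk⟩ := exists_isLast_of_ne_zero h0
    exact (hM.2.1 _ _ _ _ h hk hj).not_ge (hii'.trans hik)
  · exact h.2 i' (Prod.mk_lt_mk_iff_left.mp hq)

theorem IsRRCEF.exists_mem_piv_of_ne_zero (hM : IsRRCEF M) {i j : Fin n} (h : M i j ≠ 0) :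
    ∃ k, i ≤ k ∧ (k, j) ∈ Piv M :=
  (exists_isLast_of_ne_zero h).imp fun _ ⟨hik, hk⟩ => ⟨hik, hM.mem_piv_of_isLast hk⟩

theorem IsRRCEF.apply_of_mem_piv (hM : IsRRCEF M) {k j : Fin n} (h : (k, j) ∈ Piv M) (l : Fin n) :
    M k l = if j = l then 1 else 0 := by
  obtain ⟨hone, hzero⟩ := hM.2.2 k j (isLast_of_mem_piv h)
  split_ifs with hl
  · exact hl ▸ hone
  · exact hzero l (Ne.symm hl)

theorem IsRRCEF.apply_of_mem_piv_of_le (hM : IsRRCEF M) {i k j : Fin n} (h : (k, j) ∈ Piv M)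
    (hki : k ≤ i) : M i j = if i = k then 1 else 0 := by
  rcases hki.eq_or_lt with rfl | hlt
  · simp [hM.apply_of_mem_piv h]
  · rw [if_neg hlt.ne', (isLast_of_mem_piv h).2 i hlt]

theorem exists_mem_piv_lt_of_apply_ne (hM : IsRRCEF M) (hN : IsRRCEF N) (hPiv : Piv M = Piv N)
    {i j : Fin n} (h : M i j ≠ N i j) : ∃ k, i < k ∧ (k, j) ∈ Piv N := by
  by_contra! habove
  apply h
  by_cases hcol : ∃ k, (k, j) ∈ Piv N
  · obtain ⟨k, hk⟩ := hcol
    have hki : k ≤ i := not_lt.mp fun hik => habove k hik hk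
    rw [hM.apply_of_mem_piv_of_le (hPiv ▸ hk) hki, hN.apply_of_mem_piv_of_le hk hki]
  · rw [not_exists] at hcol
    have hM0 : M i j = 0 := by_contra fun h0 =>
      (hM.exists_mem_piv_of_ne_zero h0).elim fun k hk => hcol k (hPiv ▸ hk.2)
    have hN0 : N i j = 0 := by_contra fun h0 =>
      (hN.exists_mem_piv_of_ne_zero h0).elim fun k hk => hcol k hk.2
    rw [hM0, hN0]

end Pivots

section PivotMatrix

noncomputable def pivotMatrix (N : Matrix (Fin n) (Fin n) F) : Matrix (Fin n) (Fin n) F :=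
  of fun i j => (Piv N).indicator 1 (i, j)

variable {N D : Matrix (Fin n) (Fin n) F}

theorem IsRRCEF.pivotMatrix_transpose_mul_apply (hN : IsRRCEF N) {k j : Fin n}
    (h : (k, j) ∈ Piv N) (l : Fin n) :
    ((pivotMatrix N)ᵀ * N) j l = (1 : Matrix (Fin n) (Fin n) F) j l := by
  rw [mul_apply, Finset.sum_eq_single k, one_apply]
  · simp [pivotMatrix, h, hN.apply_of_mem_piv h]
  · intro k' _ hk'
    rw [transpose_apply, pivotMatrix, of_apply,
      Set.indicator_of_notMem fun h' => hk' (eq_of_mem_piv_of_mem_piv h' h), zero_mul]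
  · simp

theorem IsRRCEF.mul_pivotMatrix_transpose_mul (hN : IsRRCEF N)
    (hD : ∀ i j, D i j ≠ 0 → ∃ k, (k, j) ∈ Piv N) : D * ((pivotMatrix N)ᵀ * N) = D := by
  conv_rhs => rw [← Matrix.mul_one D]
  ext i l
  rw [mul_apply, mul_apply]
  refine Finset.sum_congr rfl fun j _ => ?_
  by_cases hij : D i j = 0
  · rw [hij, zero_mul, zero_mul]
  · obtain ⟨k, hk⟩ := hD i j hij
    rw [hN.pivotMatrix_transpose_mul_apply hk]

theorem strictUpperTri_mul_pivotMatrix_transpose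
    (hD : ∀ i j, D i j ≠ 0 → ∃ k, i < k ∧ (k, j) ∈ Piv N) :
    StrictUpperTri (D * (pivotMatrix N)ᵀ) := fun i k hki => by
  rw [mul_apply]
  refine Finset.sum_eq_zero fun j _ => by_contra fun hne => ?_
  obtain ⟨hij, hkj⟩ := mul_ne_zero_iff.mp hne
  obtain ⟨k', hik', hk'⟩ := hD i j hij
  have hk : (k, j) ∈ Piv N := Set.mem_of_indicator_ne_zero hkj
  exact (eq_of_mem_piv_of_mem_piv hk' hk ▸ hik').not_ge hki

theorem exists_eq_mul_of_piv_eq {M : Matrix (Fin n) (Fin n) F} (hM : IsRRCEF M) (hN : IsRRCEF N)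
    (hPiv : Piv M = Piv N) : ∃ G : Matrix (Fin n) (Fin n) F, IsUnit G ∧ UpperTri G ∧ M = G * N := by
  have hD : ∀ i j, (M - N) i j ≠ 0 → ∃ k, i < k ∧ (k, j) ∈ Piv N := fun i j h =>
    exists_mem_piv_lt_of_apply_ne hM hN hPiv (sub_ne_zero.mp h)
  have hA := strictUpperTri_mul_pivotMatrix_transpose hD
  refine ⟨1 + (M - N) * (pivotMatrix N)ᵀ, hA.isUnit_one_add, hA.upperTri_one_add, ?_⟩
  rw [add_mul, one_mul, Matrix.mul_assoc,
    hN.mul_pivotMatrix_transpose_mul fun i j h => (hD i j h).imp fun _ => And.right,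
    add_sub_cancel]

end PivotMatrix

theorem equiv_iff_pivot_eq {F : Type*} [Field F] {n : ℕ}
    (M N : Matrix (Fin n) (Fin n) F) (hM : IsRRCEF M) (hN : IsRRCEF N) :
    (∃ G H : Matrix (Fin n) (Fin n) F, IsUnit G ∧ IsUnit H ∧
      UpperTri G ∧ UpperTri H ∧ M = G * N * Hᵀ) ↔ Piv M = Piv N := by
  constructor
  · rintro ⟨G, H, hGu, hHu, hG, hH, h⟩
    exact piv_eq_of_eq_mul hGu hHu hG hH h
  · intro hPiv
    obtain ⟨G, hGu, hG, h⟩ := exists_eq_mul_of_piv_eq hM hN hPiv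
    exact ⟨G, 1, hGu, isUnit_one, hG, upperTri_one, by rw [transpose_one, Matrix.mul_one, h]⟩

end SchubertCell
end

section
/- Let α be an antichain of size m in [n]×[m] (under the componentwise partial order), with 1 ≤ m ≤ n−1. Then the matrix M defined by M_{i,j} = 1 if (i,j) ∈ α and M_{i,j} = 0 otherwise is in reduced reverse column echelon form, has rank m, and satisfies Piv(M) = α. In particular, the set O_α of reduced reverse column echelon matrices with pivot-set α is nonempty. -/
open Matrix

namespace SchubertCell

variable {F : Type*} [Field F] {n : ℕ}

/-! Two points of an antichain in a product of chains share neither a row nor a column, so the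
indicator matrix of `α` is a partial permutation matrix: each nonzero column is a standard basis
vector, for distinct rows. This gives (CE2), (CE3) and rank `|α| = m`, and the maximal points of the
support are the points of `α` themselves. Since the `m` distinct columns of `α` lie among the first
`m`, they are exactly the first `m`, which is (CE1). -/

theorem _root_.IsAntichain.injOn_fst {α β : Type*} [Preorder α] [LinearOrder β]
    {s : Set (α × β)} (hs : IsAntichain (· ≤ ·) s) : Set.InjOn Prod.fst s := by
  intro p hp q hq h
  rcases le_total p.2 q.2 with h2 | h2
  · exact hs.eq hp hq ⟨h.le, h2⟩
  · exact (hs.eq hq hp ⟨h.ge, h2⟩).symm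

theorem _root_.IsAntichain.injOn_snd {α β : Type*} [LinearOrder α] [Preorder β]
    {s : Set (α × β)} (hs : IsAntichain (· ≤ ·) s) : Set.InjOn Prod.snd s := by
  intro p hp q hq h
  rcases le_total p.1 q.1 with h1 | h1
  · exact hs.eq hp hq ⟨h1, h.le⟩
  · exact (hs.eq hq hp ⟨h1, h.ge⟩).symm

theorem eq_setOf_val_lt_of_ncard_eq {m : ℕ} {t : Set (Fin n)} (ht : ∀ j ∈ t, (j : ℕ) < m)
    (hcard : t.ncard = m) : t = {j : Fin n | (j : ℕ) < m} := by
  refine Set.eq_of_subset_of_ncard_le ht ?_ (Set.toFinite _)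
  calc {j : Fin n | (j : ℕ) < m}.ncard ≤ (Set.Iio m).ncard :=
        Set.ncard_le_ncard_of_injOn Fin.val (fun j hj => hj) Fin.val_injective.injOn
    _ = t.ncard := by rw [Set.ncard_Iio_nat, hcard]

noncomputable def indicatorMatrix {ι κ : Type*} (s : Set (ι × κ)) : Matrix ι κ F :=
  of fun i j => s.indicator 1 (i, j)

section indicatorMatrix

variable {ι κ : Type*} {s : Set (ι × κ)}

theorem indicatorMatrix_apply_ne_zero_iff {i : ι} {j : κ} :
    indicatorMatrix (F := F) s i j ≠ 0 ↔ (i, j) ∈ s := by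
  simp [indicatorMatrix]

theorem indicatorMatrix_apply_of_mem {i : ι} {j : κ} (h : (i, j) ∈ s) :
    indicatorMatrix (F := F) s i j = 1 := by
  simp [indicatorMatrix, h]

theorem indicatorMatrix_apply_of_notMem {i : ι} {j : κ} (h : (i, j) ∉ s) :
    indicatorMatrix (F := F) s i j = 0 := by
  simp [indicatorMatrix, h]

theorem col_indicatorMatrix_of_mem [DecidableEq ι] (hsnd : Set.InjOn Prod.snd s) {i : ι} {j : κ}
    (h : (i, j) ∈ s) : (indicatorMatrix (F := F) s).col j = Pi.single i 1 := by
  ext i'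
  by_cases hi : i' = i
  · subst hi
    simp [indicatorMatrix_apply_of_mem h]
  · have : (i', j) ∉ s := fun h' => hi (congrArg Prod.fst (hsnd h' h rfl))
    simp [indicatorMatrix_apply_of_notMem this, hi]

theorem col_indicatorMatrix_of_forall_notMem {j : κ} (h : ∀ i, (i, j) ∉ s) :
    (indicatorMatrix (F := F) s).col j = 0 := by
  ext i
  exact indicatorMatrix_apply_of_notMem (h i)

theorem rank_indicatorMatrix [Fintype ι] [Fintype κ]
    (hfst : Set.InjOn Prod.fst s) (hsnd : Set.InjOn Prod.snd s) :
    (indicatorMatrix (F := F) s).rank = s.ncard := by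
  classical
  let e : s → ι → F := fun p => Pi.basisFun F ι p.1.1
  have he : LinearIndependent F e :=
    (Pi.basisFun F ι).linearIndependent.comp _ fun p q h => Subtype.ext (hfst p.2 q.2 h)
  have hcol (p : s) : (indicatorMatrix s).col p.1.2 = e p := by
    simp [e, col_indicatorMatrix_of_mem hsnd p.2]
  have hspan : Submodule.span F (Set.range (indicatorMatrix (F := F) s).col) =
      Submodule.span F (Set.range e) := by
    refine le_antisymm (Submodule.span_le.2 ?_) (Submodule.span_mono ?_)
    · rintro _ ⟨j, rfl⟩
      by_cases h : ∃ i, (i, j) ∈ s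
      · obtain ⟨i, hi⟩ := h
        exact Submodule.subset_span ⟨⟨(i, j), hi⟩, (hcol ⟨(i, j), hi⟩).symm⟩
      · rw [col_indicatorMatrix_of_forall_notMem (not_exists.1 h)]
        exact zero_mem _
    · rintro _ ⟨p, rfl⟩
      exact ⟨p.1.2, hcol p⟩
  rw [rank_eq_finrank_span_cols, hspan, finrank_span_eq_card he, Set.ncard_eq_toFinset_card',
    Set.toFinset_card]

end indicatorMatrix

section square

variable {s : Set (Fin n × Fin n)}

theorem piv_indicatorMatrix (hs : IsAntichain (· ≤ ·) s) : Piv (indicatorMatrix (F := F) s) = s := by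
  ext p
  refine ⟨fun hp => indicatorMatrix_apply_ne_zero_iff.1 hp.1, fun hp => ?_⟩
  exact ⟨indicatorMatrix_apply_ne_zero_iff.2 hp,
    fun q hpq => indicatorMatrix_apply_of_notMem fun hq => hs.not_lt hp hq hpq⟩

theorem isLast_indicatorMatrix_iff (hsnd : Set.InjOn Prod.snd s) {i j : Fin n} :
    IsLast (indicatorMatrix (F := F) s) i j ↔ (i, j) ∈ s := by
  refine ⟨fun h => indicatorMatrix_apply_ne_zero_iff.1 h.1, fun h => ?_⟩
  refine ⟨indicatorMatrix_apply_ne_zero_iff.2 h, fun i' hi' => indicatorMatrix_apply_of_notMem ?_⟩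
  exact fun h' => hi'.ne (congrArg Prod.fst (hsnd h h' rfl))

theorem isRRCEF_indicatorMatrix (hs : IsAntichain (· ≤ ·) s) (hcols : IsLowerSet (Prod.snd '' s)) :
    IsRRCEF (indicatorMatrix (F := F) s) := by
  simp only [IsRRCEF, isLast_indicatorMatrix_iff hs.injOn_snd]
  refine ⟨?_, ?_, ?_⟩
  · rintro j j' hjj' ⟨i, hi⟩
    obtain ⟨p, hp, rfl⟩ := hcols hjj' ⟨_, indicatorMatrix_apply_ne_zero_iff.1 hi, rfl⟩
    exact ⟨p.1, indicatorMatrix_apply_ne_zero_iff.2 hp⟩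
  · intro i j i' j' hij hij' hjj'
    by_contra! hii'
    exact hs.not_lt hij hij' (Prod.mk_lt_mk_of_le_of_lt hii' hjj')
  · intro i j hij
    refine ⟨indicatorMatrix_apply_of_mem hij, fun j' hj' => indicatorMatrix_apply_of_notMem ?_⟩
    exact fun hij' => hj' (congrArg Prod.snd (hs.injOn_fst hij' hij rfl))

end square

theorem indicator_matrix_of_antichain_general {F : Type*} [Field F] {n m : ℕ}
    (α : Set (Fin n × Fin n)) (hanti : IsAntichain (· ≤ ·) α)
    (hcol : ∀ p ∈ α, (p.2 : ℕ) < m) (hcard : α.ncard = m)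
    (M : Matrix (Fin n) (Fin n) F)
    (hM1 : ∀ p : Fin n × Fin n, p ∈ α → M p.1 p.2 = 1)
    (hM0 : ∀ p : Fin n × Fin n, p ∉ α → M p.1 p.2 = 0) :
    IsRRCEF M ∧ M.rank = m ∧ Piv M = α := by
  obtain rfl : M = indicatorMatrix α := by
    ext i j
    by_cases h : (i, j) ∈ α
    · rw [hM1 _ h, indicatorMatrix_apply_of_mem h]
    · rw [hM0 _ h, indicatorMatrix_apply_of_notMem h]
  have hcols : Prod.snd '' α = {j : Fin n | (j : ℕ) < m} :=
    eq_setOf_val_lt_of_ncard_eq (Set.forall_mem_image.2 hcol)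
      (by rw [hanti.injOn_snd.ncard_image, hcard])
  refine ⟨isRRCEF_indicatorMatrix hanti ?_, ?_, piv_indicatorMatrix hanti⟩
  · rw [hcols]
    exact fun _ _ hle hlt => lt_of_le_of_lt (Fin.le_def.1 hle) hlt
  · rw [rank_indicatorMatrix hanti.injOn_fst hanti.injOn_snd, hcard]

theorem indicator_matrix_of_antichain {F : Type*} [Field F] {n m : ℕ}
    (hm1 : 1 ≤ m) (hm2 : m ≤ n - 1)
    (α : Set (Fin n × Fin n)) (hanti : IsAntichain (· ≤ ·) α)
    (hcol : ∀ p ∈ α, (p.2 : ℕ) < m) (hcard : α.ncard = m)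
    (M : Matrix (Fin n) (Fin n) F)
    (hM1 : ∀ p : Fin n × Fin n, p ∈ α → M p.1 p.2 = 1)
    (hM0 : ∀ p : Fin n × Fin n, p ∉ α → M p.1 p.2 = 0) :
    IsRRCEF M ∧ M.rank = m ∧ Piv M = α :=
  indicator_matrix_of_antichain_general α hanti hcol hcard M hM1 hM0
end SchubertCell
end

section
/- Fix 1 ≤ m ≤ n−1. The map φ_m sending an antichain α of size m in [n]×[m] to the sequence λ = (λ_1,…,λ_{n−m}), where λ_i = |{j : (d_i, j) ∈ D(α)}| and d_i is the i-th smallest row index not occurring in α, is a bijection from the set of antichains of size m in [n]×[m] (with componentwise order) to the set of integer partitions with at most n−m parts and largest part at most m. -/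
open Matrix

namespace Finset

variable {α : Type*} [LinearOrder α]

def numAbove (R : Finset α) (a : α) : ℕ := #{x ∈ R | a < x}

lemma numAbove_le_card (R : Finset α) (a : α) : numAbove R a ≤ #R := card_filter_le _ _

lemma numAbove_lt_card {R : Finset α} {r : α} (hr : r ∈ R) : numAbove R r < #R :=
  card_lt_card <| filter_ssubset.2 ⟨r, hr, lt_irrefl r⟩

lemma numAbove_antitone (R : Finset α) : Antitone (numAbove R) := fun _ _ hab =>
  card_le_card <| monotone_filter_right _ fun _ _ hx => hab.trans_lt hx

lemma numAbove_lt_numAbove {R : Finset α} {a r : α} (hr : r ∈ R) (har : a < r) :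
    numAbove R r < numAbove R a := by
  refine card_lt_card <| (ssubset_iff_of_subset ?_).2 ⟨r, by simp [hr, har], by simp⟩
  exact monotone_filter_right _ fun _ _ hx => har.trans hx

lemma card_filter_lt_add_numAbove {R : Finset α} {a : α} (ha : a ∉ R) :
    #{x ∈ R | x < a} + numAbove R a = #R := by
  rw [add_comm, numAbove, ← card_filter_add_card_filter_not (s := R) (a < ·)]
  congr 2
  exact filter_congr fun x hx => by
    rw [not_lt, le_iff_lt_or_eq, or_iff_left (ne_of_mem_of_not_mem hx ha)]

lemma exists_mem_lt_le_numAbove_iff {R : Finset α} {a : α} {j : ℕ} :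
    (∃ r ∈ R, a < r ∧ j ≤ numAbove R r) ↔ j < numAbove R a := by
  constructor
  · rintro ⟨r, hr, har, hj⟩
    exact hj.trans_lt (numAbove_lt_numAbove hr har)
  · intro hj
    have hne : ({x ∈ R | a < x} : Finset α).Nonempty := card_pos.1 (j.zero_le.trans_lt hj)
    set r := ({x ∈ R | a < x} : Finset α).min' hne
    obtain ⟨hr, har⟩ := mem_filter.1 (min'_mem _ hne)
    have hsplit : ({x ∈ R | a < x} : Finset α) = insert r {x ∈ R | r < x} := by
      ext x
      simp only [mem_insert, mem_filter]
      constructor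
      · rintro ⟨hx, hax⟩
        exact (min'_le _ x (mem_filter.2 ⟨hx, hax⟩)).eq_or_lt.imp Eq.symm (⟨hx, ·⟩)
      · rintro (rfl | ⟨hx, hrx⟩)
        exacts [⟨hr, har⟩, ⟨hx, har.trans hrx⟩]
    have : numAbove R a = numAbove R r + 1 := by
      rw [numAbove, hsplit, card_insert_of_notMem (by simp)]; rfl
    exact ⟨r, hr, har, by omega⟩

lemma val_add_numAbove {n k : ℕ} {R : Finset (Fin n)} {d : Fin k → Fin n} (hd : StrictMono d)
    (hrange : Set.range d = ↑Rᶜ) (i : Fin k) : (d i : ℕ) + numAbove R (d i) = i + #R := by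
  have hmem : ∀ x, x ∉ R ↔ x ∈ Set.range d := fun x => by simp [hrange]
  have hdi : d i ∉ R := (hmem _).2 ⟨i, rfl⟩
  have hbelow_compl : #{x ∈ Rᶜ | x < d i} = i := by
    have : ({x ∈ Rᶜ | x < d i} : Finset (Fin n)) = (Iio i).image d := by
      ext x
      simp only [mem_filter, mem_compl, hmem, mem_image, mem_Iio]
      constructor
      · rintro ⟨⟨i', rfl⟩, hlt⟩
        exact ⟨i', hd.lt_iff_lt.1 hlt, rfl⟩
      · rintro ⟨i', hlt, rfl⟩
        exact ⟨⟨i', rfl⟩, hd hlt⟩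
    rw [this, card_image_of_injective _ hd.injective, Fin.card_Iio]
  have hbelow : #{x ∈ R | x < d i} + #{x ∈ Rᶜ | x < d i} = d i := by
    rw [← card_union_of_disjoint (disjoint_filter_filter disjoint_compl_right), ← filter_union,
      union_compl, filter_gt_eq_Iio, Fin.card_Iio]
  have := card_filter_lt_add_numAbove hdi
  omega

end Finset

open Finset

section ProdAntichain

variable {ι κ : Type*} [LinearOrder ι] [LinearOrder κ] {s : Set (ι × κ)}

lemma IsAntichain.injOn_fst_s9 (hs : IsAntichain (· ≤ ·) s) : s.InjOn Prod.fst := by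
  intro p hp q hq h
  rcases le_total p.2 q.2 with h2 | h2
  · exact hs.eq hp hq (Prod.mk_le_mk.2 ⟨h.le, h2⟩)
  · exact (hs.eq hq hp (Prod.mk_le_mk.2 ⟨h.ge, h2⟩)).symm

lemma IsAntichain.injOn_snd_s9 (hs : IsAntichain (· ≤ ·) s) : s.InjOn Prod.snd := by
  intro p hp q hq h
  rcases le_total p.1 q.1 with h1 | h1
  · exact hs.eq hp hq (Prod.mk_le_mk.2 ⟨h1, h.le⟩)
  · exact (hs.eq hq hp (Prod.mk_le_mk.2 ⟨h1, h.ge⟩)).symm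

lemma IsAntichain.snd_lt_iff_fst_lt (hs : IsAntichain (· ≤ ·) s) {p q : ι × κ} (hp : p ∈ s)
    (hq : q ∈ s) : q.2 < p.2 ↔ p.1 < q.1 := by
  constructor
  · intro h2
    by_contra! h1
    exact h2.ne (congrArg Prod.snd (hs.eq hq hp (Prod.mk_le_mk.2 ⟨h1, h2.le⟩)))
  · intro h1
    by_contra! h2
    exact h1.ne (congrArg Prod.fst (hs.eq hp hq (Prod.mk_le_mk.2 ⟨h1.le, h2⟩)))

/-- The columns of `A` are exactly `0, …, #A - 1`, so the column of `p` is the number of points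
of `A` in smaller columns, and these are the points in higher rows. -/
lemma IsAntichain.snd_eq_numAbove [DecidableEq ι] {n : ℕ} {A : Finset (ι × Fin n)}
    (hA : IsAntichain (· ≤ ·) (A : Set (ι × Fin n))) (hcol : ∀ p ∈ A, (p.2 : ℕ) < #A)
    {p : ι × Fin n} (hp : p ∈ A) : (p.2 : ℕ) = numAbove (A.image Prod.fst) p.1 := by
  have hcols : A.image Prod.snd = ({c : Fin n | (c : ℕ) < #A} : Finset (Fin n)) := by
    refine eq_of_subset_of_card_le (fun c hc => ?_) ?_
    · obtain ⟨q, hq, rfl⟩ := mem_image.1 hc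
      simpa using hcol q hq
    · rw [Fin.card_filter_val_lt, card_image_of_injOn hA.injOn_snd_s9]
      exact min_le_right _ _
  calc (p.2 : ℕ) = #{c : Fin n | c < p.2} := by rw [filter_gt_eq_Iio, Fin.card_Iio]
    _ = #{c ∈ A.image Prod.snd | c < p.2} := by
        rw [hcols, filter_filter]
        exact congrArg card (filter_congr fun c _ =>
          ⟨fun h => ⟨(Fin.lt_def.1 h).trans (hcol p hp), h⟩, And.right⟩)
    _ = #{q ∈ A | q.2 < p.2} := by
        rw [filter_image,
          card_image_of_injOn (hA.injOn_snd_s9.mono (coe_subset.2 (filter_subset _ _)))]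
    _ = #{q ∈ A | p.1 < q.1} := by
        rw [filter_congr fun q hq => hA.snd_lt_iff_fst_lt (mem_coe.2 hp) (mem_coe.2 hq)]
    _ = numAbove (A.image Prod.fst) p.1 := by
        rw [numAbove, filter_image,
          card_image_of_injOn (hA.injOn_fst_s9.mono (coe_subset.2 (filter_subset _ _)))]

end ProdAntichain

namespace SchubertCell

variable {n : ℕ}

section Staircase

noncomputable def rows (α : Set (Fin n × Fin n)) : Finset (Fin n) :=
  (Set.toFinite α).toFinset.image Prod.fst

lemma coe_rows (α : Set (Fin n × Fin n)) : (rows α : Set (Fin n)) = Prod.fst '' α := by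
  simp [rows]

lemma notMem_rows_iff {α : Set (Fin n × Fin n)} {i : Fin n} :
    i ∉ rows α ↔ ∀ k, (i, k) ∉ α := by
  simp [rows]

lemma card_rows {α : Set (Fin n × Fin n)} (hα : IsAntichain (· ≤ ·) α) :
    #(rows α) = α.ncard := by
  rw [← Set.ncard_coe_finset, coe_rows, hα.injOn_fst_s9.ncard_image]

def staircase (R : Finset (Fin n)) : Set (Fin n × Fin n) :=
  {p | p.1 ∈ R ∧ (p.2 : ℕ) = numAbove R p.1}

lemma isAntichain_staircase (R : Finset (Fin n)) : IsAntichain (· ≤ ·) (staircase R) := by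
  rintro p ⟨hp, hpc⟩ q ⟨hq, hqc⟩ hne hle
  rcases (Prod.mk_le_mk.1 hle).1.eq_or_lt with h1 | h1
  · exact hne (Prod.ext h1 (Fin.ext (by rw [hpc, hqc, h1])))
  · have := numAbove_lt_numAbove hq h1
    have : (p.2 : ℕ) ≤ q.2 := (Prod.mk_le_mk.1 hle).2
    omega

lemma fst_image_staircase (R : Finset (Fin n)) : Prod.fst '' staircase R = R := by
  refine subset_antisymm (fun _ ⟨p, hp, h⟩ => h ▸ hp.1) fun r hr => ?_
  exact ⟨(r, ⟨_, (numAbove_lt_card hr).trans_le (card_finset_fin_le R)⟩), ⟨hr, rfl⟩, rfl⟩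

lemma rows_staircase (R : Finset (Fin n)) : rows (staircase R) = R :=
  coe_injective ((coe_rows _).trans (fst_image_staircase R))

lemma ncard_staircase (R : Finset (Fin n)) : (staircase R).ncard = #R := by
  rw [← (isAntichain_staircase R).injOn_fst_s9.ncard_image, fst_image_staircase,
    Set.ncard_coe_finset]

lemma eq_staircase_rows_of_isAntichain {α : Set (Fin n × Fin n)} (hα : IsAntichain (· ≤ ·) α)
    (hcol : ∀ p ∈ α, (p.2 : ℕ) < α.ncard) : α = staircase (rows α) := by
  obtain ⟨A, rfl⟩ := (Set.toFinite α).exists_finset_coe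
  have hrows : rows ↑A = A.image Prod.fst := coe_injective (by simp [coe_rows])
  rw [Set.ncard_coe_finset] at hcol
  ext p
  simp only [staircase, hrows, Set.mem_ofPred_eq, mem_coe]
  refine ⟨fun hp => ⟨mem_image_of_mem _ hp, hα.snd_eq_numAbove hcol hp⟩, fun ⟨hr, hc⟩ => ?_⟩
  obtain ⟨q, hq, hqp⟩ := mem_image.1 hr
  have : q = p := Prod.ext hqp (Fin.ext (by rw [hα.snd_eq_numAbove hcol hq, hc, hqp]))
  exact this ▸ hq

lemma ncard_row_dSet_staircase {R : Finset (Fin n)} {a : Fin n} (ha : a ∉ R) :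
    {j | (a, j) ∈ DSet (staircase R)}.ncard = numAbove R a := by
  have hrow : {j | (a, j) ∈ DSet (staircase R)} = {j : Fin n | (j : ℕ) < numAbove R a} := by
    ext j
    simp only [DSet, Down, staircase, Set.mem_ofPred_eq, ← exists_mem_lt_le_numAbove_iff]
    constructor
    · rintro ⟨⟨q, ⟨hq, hqc⟩, hlt⟩, -⟩
      have hne : a ≠ q.1 := fun h => ha (h ▸ hq)
      refine ⟨q.1, hq, ?_, hqc ▸ ?_⟩
      · rcases Prod.lt_iff.1 hlt with h | h
        exacts [h.1, h.1.lt_of_ne hne]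
      · rcases Prod.lt_iff.1 hlt with h | h
        exacts [Fin.le_def.1 h.2, (Fin.lt_def.1 h.2).le]
    · rintro ⟨r, hr, har, hj⟩
      have hlt : numAbove R r < n := (numAbove_lt_card hr).trans_le (card_finset_fin_le R)
      exact ⟨⟨(r, ⟨_, hlt⟩), ⟨hr, rfl⟩, Prod.lt_iff.2 (Or.inl ⟨har, Fin.le_def.2 hj⟩)⟩,
        fun _ hk => ha hk.1⟩
  rw [hrow, Set.ncard_eq_toFinset_card', Set.toFinset_ofPred, Fin.card_filter_val_lt,
    min_eq_right ((numAbove_le_card R a).trans (card_finset_fin_le R))]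

end Staircase

section Partitions

abbrev BoxPartition (k m : ℕ) := {l : Fin k → ℕ // Antitone l ∧ ∀ i, l i ≤ m}

variable {m : ℕ}

lemma card_compl_of_card_eq {R : Finset (Fin n)} (hR : #R = m) : #Rᶜ = n - m := by
  rw [card_compl, Fintype.card_fin, hR]

noncomputable def partitionOfRows (R : {R : Finset (Fin n) // #R = m}) :
    BoxPartition (n - m) m :=
  ⟨fun i => numAbove R.1 (R.1ᶜ.orderEmbOfFin (card_compl_of_card_eq R.2) i),
    (numAbove_antitone _).comp_monotone (OrderEmbedding.monotone _),
    fun _ => (numAbove_le_card _ _).trans R.2.le⟩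

lemma partitionOfRows_injective : Function.Injective (partitionOfRows (n := n) (m := m)) := by
  rintro ⟨R, hR⟩ ⟨R', hR'⟩ h
  have henum : ⇑(Rᶜ.orderEmbOfFin (card_compl_of_card_eq hR)) =
      R'ᶜ.orderEmbOfFin (card_compl_of_card_eq hR') := by
    funext i
    have hl := congrFun (congrArg Subtype.val h) i
    have := val_add_numAbove (OrderEmbedding.strictMono _)
      (range_orderEmbOfFin Rᶜ (card_compl_of_card_eq hR)) i
    have := val_add_numAbove (OrderEmbedding.strictMono _)
      (range_orderEmbOfFin R'ᶜ (card_compl_of_card_eq hR')) i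
    simp only [partitionOfRows] at hl
    exact Fin.ext (by omega)
  have := congrArg Set.range henum
  simp only [range_orderEmbOfFin, coe_inj, compl_inj_iff] at this
  exact Subtype.ext this

lemma partitionOfRows_surjective (hmn : m ≤ n) :
    Function.Surjective (partitionOfRows (n := n) (m := m)) := by
  rintro ⟨l, hanti, hle⟩
  -- the `i`-th free row, read off from `d i + l i = i + m`
  let d : Fin (n - m) → Fin n := fun i => ⟨i + (m - l i), by have := hle i; omega⟩
  have hd : StrictMono d := fun i i' h => by
    have := hanti h.le; have := hle i; simp only [d, Fin.mk_lt_mk]; omega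
  set R := (univ.image d)ᶜ
  have hR : #R = m := by
    rw [card_compl, card_image_of_injective _ hd.injective]; simp; omega
  have hrange : Set.range d = ↑Rᶜ := by simp [R]
  refine ⟨⟨R, hR⟩, Subtype.ext (funext fun i => ?_)⟩
  have henum := orderEmbOfFin_unique (card_compl_of_card_eq hR) (fun x => by simp [R]) hd
  have hsum := val_add_numAbove hd hrange i
  rw [hR] at hsum
  show numAbove R (Rᶜ.orderEmbOfFin _ i) = l i
  rw [← henum]
  have := hle i
  simp only [d] at hsum ⊢
  omega

end Partitions

abbrev SizedAntichain (n m : ℕ) :=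
  {α : Set (Fin n × Fin n) // IsAntichain (· ≤ ·) α ∧ (∀ p ∈ α, (p.2 : ℕ) < m) ∧ α.ncard = m}

lemma SizedAntichain.eq_staircase_rows {m : ℕ} (α : SizedAntichain n m) :
    α.1 = staircase (rows α.1) :=
  eq_staircase_rows_of_isAntichain α.2.1 fun p hp => α.2.2.2.symm ▸ α.2.2.1 p hp

noncomputable def antichainEquivRows (n m : ℕ) :
    SizedAntichain n m ≃ {R : Finset (Fin n) // #R = m} where
  toFun α := ⟨rows α.1, (card_rows α.2.1).trans α.2.2.2⟩
  invFun R := ⟨staircase R.1, isAntichain_staircase R.1,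
    fun _ hp => R.2 ▸ hp.2 ▸ numAbove_lt_card hp.1, (ncard_staircase R.1).trans R.2⟩
  left_inv α := Subtype.ext α.eq_staircase_rows.symm
  right_inv R := Subtype.ext (rows_staircase R.1)

theorem antichains_biject_partitions_general (n m : ℕ) (hm2 : m ≤ n - 1) :
    ∃ φ : {α : Set (Fin n × Fin n) // IsAntichain (· ≤ ·) α ∧
            (∀ p ∈ α, (p.2 : ℕ) < m) ∧ α.ncard = m} →
          {l : Fin (n - m) → ℕ // Antitone l ∧ ∀ i, l i ≤ m},
      Function.Bijective φ ∧
      ∀ (α : {α : Set (Fin n × Fin n) // IsAntichain (· ≤ ·) α ∧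
            (∀ p ∈ α, (p.2 : ℕ) < m) ∧ α.ncard = m})
        (d : Fin (n - m) → Fin n), StrictMono d →
        (∀ i : Fin n, (∀ k : Fin n, (i, k) ∉ α.val) ↔ i ∈ Set.range d) →
        ∀ i : Fin (n - m),
          (φ α).val i = Set.ncard {j : Fin n | (d i, j) ∈ DSet α.val} := by
  have hmn : m ≤ n := hm2.trans (Nat.sub_le n 1)
  let φ := (antichainEquivRows n m).trans
    (Equiv.ofBijective _ ⟨partitionOfRows_injective, partitionOfRows_surjective hmn⟩)
  refine ⟨φ, φ.bijective, fun α d hd hfree i => ?_⟩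
  have hR : #(rows α.1) = m := (card_rows α.2.1).trans α.2.2.2
  have hdR : ∀ x, d x ∈ (rows α.1)ᶜ := fun x => by
    rw [mem_compl, notMem_rows_iff]
    exact (hfree _).2 ⟨x, rfl⟩
  have henum := orderEmbOfFin_unique (card_compl_of_card_eq hR) hdR hd
  show numAbove (rows α.1) ((rows α.1)ᶜ.orderEmbOfFin _ i) = _
  rw [← henum, ← ncard_row_dSet_staircase (mem_compl.1 (hdR i)),
    ← SizedAntichain.eq_staircase_rows α]

theorem antichains_biject_partitions (n m : ℕ) (hm1 : 1 ≤ m) (hm2 : m ≤ n - 1) :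
    ∃ φ : {α : Set (Fin n × Fin n) // IsAntichain (· ≤ ·) α ∧
            (∀ p ∈ α, (p.2 : ℕ) < m) ∧ α.ncard = m} →
          {l : Fin (n - m) → ℕ // Antitone l ∧ ∀ i, l i ≤ m},
      Function.Bijective φ ∧
      ∀ (α : {α : Set (Fin n × Fin n) // IsAntichain (· ≤ ·) α ∧
            (∀ p ∈ α, (p.2 : ℕ) < m) ∧ α.ncard = m})
        (d : Fin (n - m) → Fin n), StrictMono d →
        (∀ i : Fin n, (∀ k : Fin n, (i, k) ∉ α.val) ↔ i ∈ Set.range d) →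
        ∀ i : Fin (n - m),
          (φ α).val i = Set.ncard {j : Fin n | (d i, j) ∈ DSet α.val} :=
  antichains_biject_partitions_general n m hm2
end SchubertCell
end

section
/- The relation on pairs from O_α defined by (M,N) ~ (M′,N′) iff Piv(M−N) = Piv(M′−N′) partitions O_α × O_α into classes R_{α,β} indexed by antichains β of D(α), and these relations form a symmetric association scheme on O_α: R_{α,∅} is the diagonal, each R_{α,β} is symmetric (i.e., (M,N) ∈ R_{α,β} implies (N,M) ∈ R_{α,β}), and when F is finite the intersection numbers |{L ∈ O_α : (M,L) ∈ R_{α,β}, (L,N) ∈ R_{α,γ}}| depend only on β, γ, and the class of (M,N). -/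
/-!
Two matrices of the cell `O_α` agree on the pivot rows, below the pivots and in the pivot-free
columns, and conversely adding to `M ∈ O_α` anything supported on `D(α)` stays in `O_α`: the cell
is the affine space `M + {E | supp E ⊆ D(α)}`. If `Piv (M - N) = Piv (M' - N')`, a linear map `φ`
that is unitriangular for the product order on entries preserves pivot sets and sends `M - N` to
`M' - N'`; then `L ↦ M' + φ (L - M)` maps the triangles over `(M, N)` injectively to those over
`(M', N')`, and symmetrically, so the intersection numbers agree.
-/

open Matrix

namespace SchubertCell

variable {F : Type*} [Field F] {n : ℕ}

/-- The Schubert cell: reduced reverse column echelon matrices with pivot-set `α`. -/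
def OA {F : Type*} [Field F] {n : ℕ} (α : Set (Fin n × Fin n)) :
    Set (Matrix (Fin n) (Fin n) F) :=
  {M | IsRRCEF M ∧ Piv M = α}

section Pivots

variable {M X Y : Matrix (Fin n) (Fin n) F} {i j : Fin n} {q : Fin n × Fin n}

lemma mem_piv_iff_maximal : q ∈ Piv M ↔ Maximal (fun p : Fin n × Fin n ↦ M p.1 p.2 ≠ 0) q := by
  simp [Piv, maximal_iff_forall_gt]

lemma exists_mem_piv_ge (h : M q.1 q.2 ≠ 0) : ∃ p ∈ Piv M, q ≤ p := by
  obtain ⟨p, hqp, hp⟩ := Finite.exists_le_maximal (p := fun p : Fin n × Fin n ↦ M p.1 p.2 ≠ 0) h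
  exact ⟨p, mem_piv_iff_maximal.2 hp, hqp⟩

lemma eq_zero_of_not_exists_piv_ge (h : ¬∃ p ∈ Piv M, q ≤ p) : M q.1 q.2 = 0 := by
  by_contra hq
  exact h (exists_mem_piv_ge hq)

lemma isAntichain_piv (M : Matrix (Fin n) (Fin n) F) : IsAntichain (· ≤ ·) (Piv M) :=
  fun _ hp _ hq hne hle ↦ hq.1 (hp.2 _ (hle.lt_of_ne hne))

lemma piv_eq_empty_iff : Piv M = ∅ ↔ M = 0 := by
  refine ⟨fun h ↦ ?_, fun h ↦ by simp [h, Piv]⟩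
  ext i j
  by_contra hij
  obtain ⟨p, hp, -⟩ := exists_mem_piv_ge (q := (i, j)) hij
  simp [h] at hp

lemma piv_neg : Piv (-M) = Piv M := by
  simp [Piv]

lemma piv_sub_comm (M N : Matrix (Fin n) (Fin n) F) : Piv (M - N) = Piv (N - M) := by
  rw [← neg_sub, piv_neg]

lemma piv_eq_of_eq_zero_iff
    (h : ∀ q : Fin n × Fin n, (∀ s, q < s → X s.1 s.2 = 0) → (Y q.1 q.2 = 0 ↔ X q.1 q.2 = 0)) :
    Piv Y = Piv X := by
  have above : ∀ q : Fin n × Fin n, (∀ s : Fin n × Fin n, q < s → Y s.1 s.2 = 0) →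
      ∀ s : Fin n × Fin n, q < s → X s.1 s.2 = 0 := by
    intro q hY s
    induction s using WellFoundedGT.induction with
    | _ s ih => exact fun hqs ↦ (h s fun t hst ↦ ih t hst (hqs.trans hst)).1 (hY s hqs)
  ext q
  constructor
  · rintro ⟨hq, hY⟩
    exact ⟨fun h0 ↦ hq ((h q (above q hY)).2 h0), above q hY⟩
  · rintro ⟨hq, hX⟩
    exact ⟨fun h0 ↦ hq ((h q hX).1 h0),
      fun s hs ↦ (h s fun t hst ↦ hX t (hs.trans hst)).2 (hX s hs)⟩

lemma isLast_iff_maximal : IsLast M i j ↔ Maximal (fun r ↦ M r j ≠ 0) i := by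
  simp [IsLast, maximal_iff_forall_gt]

lemma exists_isLast_ge (h : M i j ≠ 0) : ∃ r, i ≤ r ∧ IsLast M r j := by
  obtain ⟨r, hir, hr⟩ := Finite.exists_le_maximal (p := fun r ↦ M r j ≠ 0) h
  exact ⟨r, hir, isLast_iff_maximal.2 hr⟩

lemma exists_ne_zero_iff_exists_isLast : (∃ i, M i j ≠ 0) ↔ ∃ i, IsLast M i j :=
  ⟨fun ⟨_, h⟩ ↦ (exists_isLast_ge h).imp fun _ ↦ And.right, fun ⟨i, h⟩ ↦ ⟨i, h.1⟩⟩

lemma IsLast.unique {i' : Fin n} (h : IsLast M i j) (h' : IsLast M i' j) : i = i' := by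
  rcases lt_trichotomy i i' with hlt | heq | hlt
  · exact absurd (h.2 i' hlt) h'.1
  · exact heq
  · exact absurd (h'.2 i hlt) h.1

lemma isLast_of_mem_piv_s16 (hq : q ∈ Piv M) : IsLast M q.1 q.2 :=
  ⟨hq.1, fun _ hi ↦ hq.2 _ (Prod.mk_lt_mk_of_lt_of_le hi le_rfl)⟩

lemma IsRRCEF.mem_piv_iff (hM : IsRRCEF M) : (i, j) ∈ Piv M ↔ IsLast M i j := by
  refine ⟨isLast_of_mem_piv_s16, fun h ↦ ?_⟩
  obtain ⟨q, hq, hle⟩ := exists_mem_piv_ge (q := (i, j)) h.1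
  rcases hle.2.eq_or_lt with hj | hj
  · have hj : j = q.2 := hj
    have hi : i = q.1 := h.unique (hj ▸ isLast_of_mem_piv_s16 hq)
    rwa [show (i, j) = q from Prod.ext hi hj]
  · exact absurd (hM.2.1 i j q.1 q.2 h (isLast_of_mem_piv_s16 hq) hj) (not_lt.2 hle.1)

lemma IsRRCEF.of_isLast_iff {N : Matrix (Fin n) (Fin n) F} (hM : IsRRCEF M)
    (hlast : ∀ i j, IsLast N i j ↔ IsLast M i j) (hrow : ∀ i j, IsLast M i j → N i = M i) :
    IsRRCEF N := by
  have hcol : ∀ j, (∃ i, N i j ≠ 0) ↔ ∃ i, M i j ≠ 0 := fun j ↦ by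
    simp only [exists_ne_zero_iff_exists_isLast, hlast]
  refine ⟨fun j j' hjj' h ↦ (hcol j).2 (hM.1 j j' hjj' ((hcol j').1 h)),
    fun i j i' j' h h' ↦ hM.2.1 i j i' j' ((hlast i j).1 h) ((hlast i' j').1 h'), fun i j h ↦ ?_⟩
  rw [hlast] at h
  simpa only [hrow i j h] using hM.2.2 i j h

end Pivots

section Cell

variable {α : Set (Fin n × Fin n)} {M N E : Matrix (Fin n) (Fin n) F} {i j : Fin n}

lemma mem_iff_isLast (hM : M ∈ OA α) : (i, j) ∈ α ↔ IsLast M i j :=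
  hM.2 ▸ hM.1.mem_piv_iff

lemma row_eq_single (hM : M ∈ OA α) {k : Fin n} (hk : (i, k) ∈ α) : M i = Pi.single k 1 := by
  obtain ⟨hone, hzero⟩ := hM.1.2.2 i k ((mem_iff_isLast hM).1 hk)
  ext j
  by_cases hj : j = k
  · simp [hj, hone]
  · simp [hj, hzero j hj]

lemma exists_mem_ge_of_ne_zero (hM : M ∈ OA α) (h : M i j ≠ 0) : ∃ r, i ≤ r ∧ (r, j) ∈ α := by
  obtain ⟨r, hir, hr⟩ := exists_isLast_ge h
  exact ⟨r, hir, (mem_iff_isLast hM).2 hr⟩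

lemma sub_mem_DSet (hM : M ∈ OA α) (hN : N ∈ OA α) (h : (M - N) i j ≠ 0) : (i, j) ∈ DSet α := by
  have hfree : ∀ k, (i, k) ∉ α := fun k hk ↦
    h (by rw [Matrix.sub_apply, row_eq_single hM hk, row_eq_single hN hk, sub_self])
  obtain ⟨r, hir, hr⟩ : ∃ r, i ≤ r ∧ (r, j) ∈ α := by
    rw [Matrix.sub_apply, sub_ne_zero] at h
    by_cases hMij : M i j = 0
    · exact exists_mem_ge_of_ne_zero hN (hMij ▸ h.symm)
    · exact exists_mem_ge_of_ne_zero hM hMij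
  have hir : i < r := hir.lt_of_ne fun e ↦ hfree j (e ▸ hr)
  exact ⟨⟨(r, j), hr, Prod.mk_lt_mk_of_lt_of_le hir le_rfl⟩, hfree⟩

lemma exists_mem_gt_of_mem_DSet (hM : M ∈ OA α) (h : (i, j) ∈ DSet α) :
    ∃ r, i < r ∧ (r, j) ∈ α := by
  obtain ⟨⟨p, hp, hlt⟩, hfree⟩ := h
  have hpM : p ∈ Piv M := hM.2 ▸ hp
  -- (CE1): column `p.2` is nonzero, hence so is column `j ≤ p.2`
  obtain ⟨r, hr⟩ := exists_ne_zero_iff_exists_isLast.1 (hM.1.1 j p.2 hlt.le.2 ⟨p.1, hpM.1⟩)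
  have hrα := (mem_iff_isLast hM).2 hr
  refine ⟨r, lt_of_not_ge fun hri ↦ ?_, hrα⟩
  have hri : r < i := hri.lt_of_ne fun e ↦ hfree j (e ▸ hrα)
  exact (hM.2 ▸ isAntichain_piv M).not_lt hrα hp
    ((Prod.mk_lt_mk_of_lt_of_le hri le_rfl).trans hlt)

lemma isLast_add_iff (hM : M ∈ OA α) (hE : ∀ i j, E i j ≠ 0 → (i, j) ∈ DSet α) :
    IsLast (M + E) i j ↔ IsLast M i j := by
  have of_mem : ∀ {r}, (r, j) ∈ α → IsLast (M + E) r j := by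
    intro r hr
    have hMr := (mem_iff_isLast hM).1 hr
    have hEr : ∀ i, r ≤ i → E i j = 0 := fun i hri ↦ by
      by_contra hEi
      obtain ⟨r', hir', hr'⟩ := exists_mem_gt_of_mem_DSet hM (hE i j hEi)
      obtain rfl := ((mem_iff_isLast hM).1 hr').unique hMr
      exact absurd hri (not_le.2 hir')
    exact ⟨by simpa [hEr r le_rfl] using hMr.1, fun i hi ↦ by simp [hMr.2 i hi, hEr i hi.le]⟩
  refine ⟨fun h ↦ ?_, fun h ↦ of_mem ((mem_iff_isLast hM).2 h)⟩
  have hME : M i j ≠ 0 ∨ E i j ≠ 0 := by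
    by_contra! h0
    exact h.1 (by simp [h0.1, h0.2])
  obtain ⟨r, -, hr⟩ | ⟨r, -, hr⟩ :=
    hME.imp (exists_mem_ge_of_ne_zero hM) fun hE' ↦ exists_mem_gt_of_mem_DSet hM (hE i j hE')
  all_goals rwa [h.unique (of_mem hr), ← mem_iff_isLast hM]

lemma add_mem_OA (hM : M ∈ OA α) (hE : ∀ i j, E i j ≠ 0 → (i, j) ∈ DSet α) : M + E ∈ OA α := by
  have hrow : ∀ i j, IsLast M i j → (M + E) i = M i := fun i j h ↦ by
    ext j'
    by_contra hE'
    exact (hE i j' (by simpa using hE')).2 j ((mem_iff_isLast hM).2 h)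
  have hR := hM.1.of_isLast_iff (fun _ _ ↦ isLast_add_iff hM hE) hrow
  refine ⟨hR, Set.ext fun ⟨i, j⟩ ↦ ?_⟩
  rw [hR.mem_piv_iff, isLast_add_iff hM hE, mem_iff_isLast hM]

end Cell

section Shear

variable {A A' X : Matrix (Fin n) (Fin n) F} {q : Fin n × Fin n}

open Classical in
noncomputable def pivAbove (A : Matrix (Fin n) (Fin n) F) (q : Fin n × Fin n) : Fin n × Fin n :=
  if h : ∃ p ∈ Piv A, q ≤ p then h.choose else q

lemma pivAbove_spec (h : ∃ p ∈ Piv A, q ≤ p) : pivAbove A q ∈ Piv A ∧ q ≤ pivAbove A q := by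
  rw [pivAbove, dif_pos h]
  exact h.choose_spec

lemma pivAbove_eq_self (h : ¬∃ p ∈ Piv A, q ≤ p) : pivAbove A q = q := by
  rw [pivAbove, dif_neg h]

lemma pivAbove_of_mem (hq : q ∈ Piv A) : pivAbove A q = q :=
  ((isAntichain_piv A).eq hq (pivAbove_spec ⟨q, hq, le_rfl⟩).1
    (pivAbove_spec ⟨q, hq, le_rfl⟩).2).symm

lemma lt_pivAbove (hq : q ∉ Piv A) (h : ∃ p ∈ Piv A, q ≤ p) : q < pivAbove A q :=
  (pivAbove_spec h).2.lt_of_ne fun e ↦ hq (e ▸ (pivAbove_spec h).1)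

/-- A pivot `q` of `A` is rescaled by `A' q / A q`; any other entry receives a multiple of the
entry at a pivot of `A` strictly above it (if any), the factors being chosen so that `A ↦ A'`. -/
noncomputable def pivotShear (A A' : Matrix (Fin n) (Fin n) F) :
    Matrix (Fin n) (Fin n) F →ₗ[F] Matrix (Fin n) (Fin n) F where
  toFun X := of fun i j ↦
    X i j + (A' i j - A i j) / A (pivAbove A (i, j)).1 (pivAbove A (i, j)).2 *
      X (pivAbove A (i, j)).1 (pivAbove A (i, j)).2
  map_add' X Y := by
    ext
    simp only [of_apply, Matrix.add_apply]
    ring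
  map_smul' c X := by
    ext
    simp only [of_apply, Matrix.smul_apply, smul_eq_mul, RingHom.id_apply]
    ring

lemma pivotShear_apply (X : Matrix (Fin n) (Fin n) F) (q : Fin n × Fin n) :
    pivotShear A A' X q.1 q.2 = X q.1 q.2 + (A' q.1 q.2 - A q.1 q.2) /
      A (pivAbove A q).1 (pivAbove A q).2 * X (pivAbove A q).1 (pivAbove A q).2 :=
  rfl

lemma pivotShear_apply_of_mem (hq : q ∈ Piv A) :
    pivotShear A A' X q.1 q.2 = A' q.1 q.2 / A q.1 q.2 * X q.1 q.2 := by
  rw [pivotShear_apply, pivAbove_of_mem hq]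
  field_simp [hq.1]
  ring

lemma pivotShear_apply_of_not_mem (hq : q ∉ Piv A) (hX : ∀ s, q < s → X s.1 s.2 = 0) :
    pivotShear A A' X q.1 q.2 = X q.1 q.2 := by
  rw [pivotShear_apply]
  by_cases h : ∃ p ∈ Piv A, q ≤ p
  · rw [hX _ (lt_pivAbove hq h), mul_zero, add_zero]
  · rw [pivAbove_eq_self h, eq_zero_of_not_exists_piv_ge h, div_zero, zero_mul, add_zero]

lemma pivotShear_apply_ne_zero {i j : Fin n} (h : pivotShear A A' X i j ≠ 0) :
    X i j ≠ 0 ∨ A i j ≠ 0 ∨ A' i j ≠ 0 := by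
  contrapose! h
  rw [pivotShear_apply X (i, j)]
  simp [h.1, h.2.1, h.2.2]

lemma pivotShear_self (h : Piv A' = Piv A) : pivotShear A A' A = A' := by
  ext i j
  rw [pivotShear_apply A (i, j)]
  by_cases hp : A (pivAbove A (i, j)).1 (pivAbove A (i, j)).2 = 0
  · have hno : ¬∃ p ∈ Piv A, (i, j) ≤ p := fun hex ↦ (pivAbove_spec hex).1.1 hp
    have hA : A i j = 0 := eq_zero_of_not_exists_piv_ge hno
    have hA' : A' i j = 0 := eq_zero_of_not_exists_piv_ge (h ▸ hno)
    simp [hA, hA']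
  · rw [div_mul_cancel₀ _ hp, add_sub_cancel]

lemma piv_pivotShear (h : Piv A' = Piv A) : Piv (pivotShear A A' X) = Piv X := by
  refine piv_eq_of_eq_zero_iff fun q hX ↦ ?_
  by_cases hq : q ∈ Piv A
  · have hA' : A' q.1 q.2 ≠ 0 := (h ▸ hq : q ∈ Piv A').1
    rw [pivotShear_apply_of_mem hq, mul_eq_zero, or_iff_right (div_ne_zero hA' hq.1)]
  · rw [pivotShear_apply_of_not_mem hq hX]

lemma pivotShear_injective (h : Piv A' = Piv A) : Function.Injective (pivotShear A A') := by
  refine (injective_iff_map_eq_zero _).2 fun X hX ↦ ?_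
  rw [← piv_eq_empty_iff, ← piv_pivotShear (X := X) h, hX, piv_eq_empty_iff]

end Shear

lemma ncard_triangles_le [Finite F] {α : Set (Fin n × Fin n)}
    {M N M' N' : Matrix (Fin n) (Fin n) F}
    (hM : M ∈ OA α) (hN : N ∈ OA α) (hM' : M' ∈ OA α) (hN' : N' ∈ OA α)
    (h : Piv (M' - N') = Piv (M - N)) (β γ : Set (Fin n × Fin n)) :
    {L | L ∈ OA α ∧ Piv (M - L) = β ∧ Piv (L - N) = γ}.ncard ≤
      {L | L ∈ OA α ∧ Piv (M' - L) = β ∧ Piv (L - N') = γ}.ncard := by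
  set φ := pivotShear (M - N) (M' - N')
  refine Set.ncard_le_ncard_of_injOn (fun L ↦ M' + φ (L - M)) ?_ ?_
  · rintro L ⟨hL, rfl, rfl⟩
    have hsupp : ∀ i j, φ (L - M) i j ≠ 0 → (i, j) ∈ DSet α := fun i j hij ↦
      (pivotShear_apply_ne_zero hij).elim (sub_mem_DSet hL hM)
        (Or.elim · (sub_mem_DSet hM hN) (sub_mem_DSet hM' hN'))
    have hsub : M' + φ (L - M) - N' = φ (L - N) := by
      rw [add_sub_right_comm, add_comm, ← pivotShear_self h, ← map_add, sub_add_sub_cancel]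
    refine ⟨add_mem_OA hM' hsupp, ?_, ?_⟩
    · rw [sub_add_cancel_left, piv_neg, piv_pivotShear h, piv_sub_comm]
    · rw [hsub, piv_pivotShear h]
  · intro L _ L' _ hLL'
    simpa using pivotShear_injective h (add_left_cancel hLL')

theorem schubert_cell_association_scheme_general {F : Type*} [Field F] [Fintype F] {n : ℕ}
    (α : Set (Fin n × Fin n)) :
    (∀ M N : Matrix (Fin n) (Fin n) F, M ∈ OA α → N ∈ OA α →
        IsAntichain (· ≤ ·) (Piv (M - N)) ∧ Piv (M - N) ⊆ DSet α) ∧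
    (∀ M N : Matrix (Fin n) (Fin n) F, M ∈ OA α → N ∈ OA α →
        (Piv (M - N) = ∅ ↔ M = N)) ∧
    (∀ M N : Matrix (Fin n) (Fin n) F, M ∈ OA α → N ∈ OA α →
        Piv (M - N) = Piv (N - M)) ∧
    (∀ β γ : Set (Fin n × Fin n), IsAntichain (· ≤ ·) β → β ⊆ DSet α →
      IsAntichain (· ≤ ·) γ → γ ⊆ DSet α →
      ∀ M N M' N' : Matrix (Fin n) (Fin n) F,
        M ∈ OA α → N ∈ OA α → M' ∈ OA α → N' ∈ OA α →
        Piv (M - N) = Piv (M' - N') →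
        Set.ncard {L | L ∈ OA α ∧ Piv (M - L) = β ∧ Piv (L - N) = γ} =
        Set.ncard {L | L ∈ OA α ∧ Piv (M' - L) = β ∧ Piv (L - N') = γ}) :=
  ⟨fun _ _ hM hN ↦ ⟨isAntichain_piv _, fun _ hp ↦ sub_mem_DSet hM hN hp.1⟩,
    fun _ _ _ _ ↦ by rw [piv_eq_empty_iff, sub_eq_zero],
    fun M N _ _ ↦ piv_sub_comm M N,
    fun β γ _ _ _ _ _ _ _ _ hM hN hM' hN' h ↦
      (ncard_triangles_le hM hN hM' hN' h.symm β γ).antisymm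
        (ncard_triangles_le hM' hN' hM hN h β γ)⟩

theorem schubert_cell_association_scheme {F : Type*} [Field F] [Fintype F] {n m : ℕ}
    (hm1 : 1 ≤ m) (hm2 : m ≤ n - 1)
    (α : Set (Fin n × Fin n)) (hanti : IsAntichain (· ≤ ·) α)
    (hcol : ∀ p ∈ α, (p.2 : ℕ) < m) (hcard : α.ncard = m) :
    (∀ M N : Matrix (Fin n) (Fin n) F, M ∈ OA α → N ∈ OA α →
        IsAntichain (· ≤ ·) (Piv (M - N)) ∧ Piv (M - N) ⊆ DSet α) ∧
    (∀ M N : Matrix (Fin n) (Fin n) F, M ∈ OA α → N ∈ OA α →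
        (Piv (M - N) = ∅ ↔ M = N)) ∧
    (∀ M N : Matrix (Fin n) (Fin n) F, M ∈ OA α → N ∈ OA α →
        Piv (M - N) = Piv (N - M)) ∧
    (∀ β γ : Set (Fin n × Fin n), IsAntichain (· ≤ ·) β → β ⊆ DSet α →
      IsAntichain (· ≤ ·) γ → γ ⊆ DSet α →
      ∀ M N M' N' : Matrix (Fin n) (Fin n) F,
        M ∈ OA α → N ∈ OA α → M' ∈ OA α → N' ∈ OA α →
        Piv (M - N) = Piv (M' - N') →
        Set.ncard {L | L ∈ OA α ∧ Piv (M - L) = β ∧ Piv (L - N) = γ} =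
        Set.ncard {L | L ∈ OA α ∧ Piv (M' - L) = β ∧ Piv (L - N') = γ}) :=
  schubert_cell_association_scheme_general α

end SchubertCell
end

section
/- Let (X, ≤) be a nonempty finite poset and for each x ∈ X let Ω_x be a finite set with |Ω_x| ≥ 2. On Ω = ∏_{x∈X} Ω_x, define for each antichain Y ⊆ X the relation R(Y) consisting of pairs (α, β) ∈ Ω × Ω such that α_x = β_x for all x ∉ Y ∪ Down(Y), and α_x ≠ β_x for all x ∈ Y, where Down(Y) = {x : x < y for some y ∈ Y}. Then the relations R(Y), as Y ranges over all antichains of X, partition Ω × Ω; R(∅) is the diagonal; each R(Y) is symmetric; and the intersection numbers |{γ ∈ Ω : (α,γ) ∈ R(Y), (γ,β) ∈ R(Z)}| depend only on Y, Z, and the antichain W with (α,β) ∈ R(W). That is, {R(Y)} forms a symmetric association scheme on Ω (the generalized wreath product of the trivial one-class schemes on the Ω_x over X). -/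
/-!
If `(a, b) ∈ R(W)` with `W` an antichain, then `W` is the set of maximal coordinates at which `a`
and `b` differ; this gives the partition. For an antichain `Y`, membership of `(a, c)` in `R(Y)`
only constrains the coordinates outside `Down Y`, where it prescribes exactly which ones agree.
Given `(a, b), (a', b') ∈ R(W)`, either some `w ∈ W` lies below no element of `Y` or of `Z`, and
then no `c` has `(a, c) ∈ R(Y)` and `(c, b) ∈ R(Z)`, because `a w ≠ b w` would force
`a w = c w = b w`; or else `a x = b x ↔ a' x = b' x` at every coordinate outside `Down Y` and
`Down Z`. In the latter case a coordinatewise permutation sending `a ↦ a'` outside `Down Y` and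
`b ↦ b'` outside `Down Z` maps the `c`'s for `(a, b)` bijectively onto those for `(a', b')`.
-/

open Matrix

namespace SchubertCell

variable {F : Type*} [Field F] {n : ℕ}

/-- The generalized wreath product relation attached to an antichain `Y`. -/
def Rrel {X : Type*} [PartialOrder X] {Ω : X → Type*} (Y : Set X) :
    Set ((∀ x, Ω x) × (∀ x, Ω x)) :=
  {ab | (∀ x, x ∉ Y ∪ Down Y → ab.1 x = ab.2 x) ∧ ∀ x ∈ Y, ab.1 x ≠ ab.2 x}

section Poset

variable {X : Type*} [PartialOrder X] {Y : Set X} {x w : X}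

theorem mem_union_Down_iff : x ∈ Y ∪ Down Y ↔ ∃ y ∈ Y, x ≤ y := by
  constructor
  · rintro (hx | ⟨y, hy, hxy⟩)
    exacts [⟨x, hx, le_rfl⟩, ⟨y, hy, hxy.le⟩]
  · rintro ⟨y, hy, hxy⟩
    rcases hxy.eq_or_lt with rfl | hxy
    exacts [Or.inl hy, Or.inr ⟨y, hy, hxy⟩]

theorem mem_Down_of_lt_of_mem_union (hxw : x < w) (hw : w ∈ Y ∪ Down Y) : x ∈ Down Y := by
  obtain ⟨y, hy, hwy⟩ := mem_union_Down_iff.mp hw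
  exact ⟨y, hy, hxw.trans_le hwy⟩

theorem notMem_Down_of_mem (hY : IsAntichain (· ≤ ·) Y) (hx : x ∈ Y) : x ∉ Down Y :=
  fun ⟨_, hy, hxy⟩ => hY hx hy hxy.ne hxy.le

end Poset

theorem exists_perm_apply_eq_of_imp {α : Type*} {P Q : Prop} {p q p' q' : α}
    (h : P → Q → (p = q ↔ p' = q')) :
    ∃ e : Equiv.Perm α, (P → e p = p') ∧ (Q → e q = q') := by
  classical
  by_cases hP : P <;> by_cases hQ : Q
  · by_cases hpq : p = q
    · subst hpq
      exact ⟨Equiv.swap p p', fun _ => Equiv.swap_apply_left p p',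
        fun _ => (Equiv.swap_apply_left p p').trans ((h hP hQ).mp rfl)⟩
    · have hpq' : p' ≠ q' := fun h' => hpq ((h hP hQ).mpr h')
      set f := Equiv.swap p p'
      have hfp : f p = p' := Equiv.swap_apply_left p p'
      have hfq : f q ≠ p' := fun h' => hpq (f.injective (h'.trans hfp.symm)).symm
      refine ⟨f.trans (Equiv.swap (f q) q'), fun _ => ?_, fun _ => Equiv.swap_apply_left _ _⟩
      rw [Equiv.trans_apply, hfp]
      exact Equiv.swap_apply_of_ne_of_ne (Ne.symm hfq) hpq'
  · exact ⟨Equiv.swap p p', fun _ => Equiv.swap_apply_left p p', fun h' => absurd h' hQ⟩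
  · exact ⟨Equiv.swap q q', fun h' => absurd h' hP, fun _ => Equiv.swap_apply_left q q'⟩
  · exact ⟨Equiv.refl α, fun h' => absurd h' hP, fun h' => absurd h' hQ⟩

section Relations

variable {X : Type*} [PartialOrder X] {Ω : X → Type*} {Y Z W : Set X}

theorem mem_Rrel_comm {a b : ∀ x, Ω x} : (a, b) ∈ Rrel Y ↔ (b, a) ∈ Rrel Y :=
  ⟨fun h => ⟨fun x hx => (h.1 x hx).symm, fun x hx => (h.2 x hx).symm⟩,
    fun h => ⟨fun x hx => (h.1 x hx).symm, fun x hx => (h.2 x hx).symm⟩⟩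

theorem mem_Rrel_empty_iff {a b : ∀ x, Ω x} : (a, b) ∈ Rrel (∅ : Set X) ↔ a = b := by
  simp [Rrel, Down, funext_iff]

theorem mem_Rrel_iff (hY : IsAntichain (· ≤ ·) Y) {a b : ∀ x, Ω x} :
    (a, b) ∈ Rrel Y ↔ ∀ x ∉ Down Y, (a x = b x ↔ x ∉ Y) := by
  constructor
  · rintro ⟨hout, hY'⟩ x hx
    exact ⟨fun h hxY => hY' x hxY h, fun hxY => hout x (by rintro (h | h) <;> contradiction)⟩
  · intro h
    refine ⟨fun x hx => (h x fun h' => hx (Or.inr h')).mpr fun h' => hx (Or.inl h'),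
      fun x hx hab => (h x (notMem_Down_of_mem hY hx)).mp hab hx⟩

theorem eq_setOf_maximal_of_mem_Rrel (hY : IsAntichain (· ≤ ·) Y) {a b : ∀ x, Ω x}
    (hab : (a, b) ∈ Rrel Y) : Y = {x | Maximal (fun x => a x ≠ b x) x} := by
  have below : ∀ z, a z ≠ b z → ∃ y ∈ Y, z ≤ y := fun z hz =>
    mem_union_Down_iff.mp (not_not.mp fun h => hz (hab.1 z h))
  ext y
  refine ⟨fun hy => ⟨hab.2 y hy, fun z hz hyz => ?_⟩, fun ⟨hy, hmax⟩ => ?_⟩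
  · obtain ⟨y', hy', hzy'⟩ := below z hz
    rwa [← hY.eq hy hy' (hyz.trans hzy')] at hzy'
  · obtain ⟨y', hy', hyy'⟩ := below y hy
    rwa [← le_antisymm hyy' (hmax (hab.2 y' hy') hyy')] at hy'

theorem mem_Rrel_setOf_maximal [Finite X] (a b : ∀ x, Ω x) :
    (a, b) ∈ Rrel {x | Maximal (fun x => a x ≠ b x) x} := by
  refine ⟨fun x hx => not_not.mp fun hne => hx ?_, fun x hx => hx.1⟩
  obtain ⟨m, hxm, hm⟩ := Finite.exists_le_maximal (p := fun x => a x ≠ b x) hne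
  exact mem_union_Down_iff.mpr ⟨m, hm, hxm⟩

theorem existsUnique_antichain_mem_Rrel [Finite X] (a b : ∀ x, Ω x) :
    ∃! Y : Set X, IsAntichain (· ≤ ·) Y ∧ (a, b) ∈ Rrel Y :=
  ⟨_, ⟨setOfPred_maximal_antichain _, mem_Rrel_setOf_maximal a b⟩,
    fun _ ⟨hY, hab⟩ => eq_setOf_maximal_of_mem_Rrel hY hab⟩

/-- The set of `c` counted by the intersection number `p^W_{YZ}` at `(a, b)`. -/
def pathSet (Y Z : Set X) (a b : ∀ x, Ω x) : Set (∀ x, Ω x) :=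
  {c | (a, c) ∈ Rrel Y ∧ (c, b) ∈ Rrel Z}

theorem pathSet_eq_empty {a b : ∀ x, Ω x} (hab : (a, b) ∈ Rrel W) {w : X} (hwW : w ∈ W)
    (hwY : w ∉ Y ∪ Down Y) (hwZ : w ∉ Z ∪ Down Z) : pathSet Y Z a b = ∅ :=
  Set.eq_empty_of_forall_notMem fun _ ⟨hac, hcb⟩ =>
    hab.2 w hwW ((hac.1 w hwY).trans (hcb.1 w hwZ))

theorem mem_Rrel_piCongrRight_iff (hY : IsAntichain (· ≤ ·) Y) (e : ∀ x, Equiv.Perm (Ω x))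
    {a a' : ∀ x, Ω x} (he : ∀ x ∉ Down Y, e x (a x) = a' x) (c : ∀ x, Ω x) :
    (a', Equiv.piCongrRight e c) ∈ Rrel Y ↔ (a, c) ∈ Rrel Y := by
  simp only [mem_Rrel_iff hY]
  refine forall_congr' fun x => imp_congr_right fun hx => ?_
  rw [← he x hx, Equiv.piCongrRight_apply, Pi.map_apply, (e x).apply_eq_iff_eq]

theorem ncard_pathSet_eq_of_perm (hY : IsAntichain (· ≤ ·) Y) (hZ : IsAntichain (· ≤ ·) Z)
    (e : ∀ x, Equiv.Perm (Ω x)) {a b a' b' : ∀ x, Ω x}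
    (hea : ∀ x ∉ Down Y, e x (a x) = a' x) (heb : ∀ x ∉ Down Z, e x (b x) = b' x) :
    (pathSet Y Z a b).ncard = (pathSet Y Z a' b').ncard := by
  have hpre : pathSet Y Z a b = Equiv.piCongrRight e ⁻¹' pathSet Y Z a' b' := by
    ext c
    simp only [pathSet, Set.mem_preimage, Set.mem_ofPred_eq, mem_Rrel_comm (a := _) (b := b),
      mem_Rrel_comm (a := _) (b := b'), mem_Rrel_piCongrRight_iff hY e hea,
      mem_Rrel_piCongrRight_iff hZ e heb]
  rw [hpre, Set.ncard_preimage_of_injective_subset_range (Equiv.injective _)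
    (by simp only [Equiv.range_eq_univ, Set.subset_univ])]

theorem eq_iff_eq_of_mem_Rrel (hW : IsAntichain (· ≤ ·) W) {a b a' b' : ∀ x, Ω x}
    (hab : (a, b) ∈ Rrel W) (hab' : (a', b') ∈ Rrel W)
    (hcover : ∀ w ∈ W, w ∈ (Y ∪ Down Y) ∪ (Z ∪ Down Z)) {x : X}
    (hxY : x ∉ Down Y) (hxZ : x ∉ Down Z) : a x = b x ↔ a' x = b' x := by
  have hxW : x ∉ Down W := by
    rintro ⟨w, hw, hxw⟩
    rcases hcover w hw with h | h
    exacts [hxY (mem_Down_of_lt_of_mem_union hxw h), hxZ (mem_Down_of_lt_of_mem_union hxw h)]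
  rw [(mem_Rrel_iff hW).mp hab x hxW, (mem_Rrel_iff hW).mp hab' x hxW]

theorem ncard_pathSet_eq (hY : IsAntichain (· ≤ ·) Y) (hZ : IsAntichain (· ≤ ·) Z)
    (hW : IsAntichain (· ≤ ·) W) {a b a' b' : ∀ x, Ω x}
    (hab : (a, b) ∈ Rrel W) (hab' : (a', b') ∈ Rrel W) :
    (pathSet Y Z a b).ncard = (pathSet Y Z a' b').ncard := by
  by_cases hcover : ∀ w ∈ W, w ∈ (Y ∪ Down Y) ∪ (Z ∪ Down Z)
  · choose e hea heb using fun x => exists_perm_apply_eq_of_imp (P := x ∉ Down Y)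
      (Q := x ∉ Down Z) (eq_iff_eq_of_mem_Rrel hW hab hab' hcover)
    exact ncard_pathSet_eq_of_perm hY hZ e hea heb
  · obtain ⟨w, hwW, hw⟩ := not_forall₂.mp hcover
    obtain ⟨hwY, hwZ⟩ := not_or.mp hw
    rw [pathSet_eq_empty hab hwW hwY hwZ, pathSet_eq_empty hab' hwW hwY hwZ]

end Relations

theorem generalized_wreath_product_scheme_general {X : Type*} [Fintype X] [PartialOrder X]
    (Ω : X → Type*) :
    (∀ a b : ∀ x, Ω x, ∃! Y : Set X,
        IsAntichain (· ≤ ·) Y ∧ (a, b) ∈ Rrel (Ω := Ω) Y) ∧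
    (∀ a b : ∀ x, Ω x, (a, b) ∈ Rrel (Ω := Ω) (∅ : Set X) ↔ a = b) ∧
    (∀ Y : Set X, IsAntichain (· ≤ ·) Y →
        ∀ a b : ∀ x, Ω x, (a, b) ∈ Rrel (Ω := Ω) Y ↔ (b, a) ∈ Rrel (Ω := Ω) Y) ∧
    (∀ Y Z W : Set X, IsAntichain (· ≤ ·) Y → IsAntichain (· ≤ ·) Z →
        IsAntichain (· ≤ ·) W →
        ∀ a b a' b' : ∀ x, Ω x,
          (a, b) ∈ Rrel (Ω := Ω) W → (a', b') ∈ Rrel (Ω := Ω) W →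
          Set.ncard {c : ∀ x, Ω x | (a, c) ∈ Rrel (Ω := Ω) Y ∧ (c, b) ∈ Rrel (Ω := Ω) Z} =
          Set.ncard {c : ∀ x, Ω x | (a', c) ∈ Rrel (Ω := Ω) Y ∧ (c, b') ∈ Rrel (Ω := Ω) Z}) :=
  ⟨existsUnique_antichain_mem_Rrel, fun _ _ => mem_Rrel_empty_iff,
    fun _ _ _ _ => mem_Rrel_comm,
    fun _ _ _ hY hZ hW _ _ _ _ hab hab' => ncard_pathSet_eq hY hZ hW hab hab'⟩

theorem generalized_wreath_product_scheme {X : Type*} [Fintype X] [PartialOrder X]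
    [Nonempty X] (Ω : X → Type*) [∀ x, Fintype (Ω x)]
    (h2 : ∀ x, 2 ≤ Fintype.card (Ω x)) :
    (∀ a b : ∀ x, Ω x, ∃! Y : Set X,
        IsAntichain (· ≤ ·) Y ∧ (a, b) ∈ Rrel (Ω := Ω) Y) ∧
    (∀ a b : ∀ x, Ω x, (a, b) ∈ Rrel (Ω := Ω) (∅ : Set X) ↔ a = b) ∧
    (∀ Y : Set X, IsAntichain (· ≤ ·) Y →
        ∀ a b : ∀ x, Ω x, (a, b) ∈ Rrel (Ω := Ω) Y ↔ (b, a) ∈ Rrel (Ω := Ω) Y) ∧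
    (∀ Y Z W : Set X, IsAntichain (· ≤ ·) Y → IsAntichain (· ≤ ·) Z →
        IsAntichain (· ≤ ·) W →
        ∀ a b a' b' : ∀ x, Ω x,
          (a, b) ∈ Rrel (Ω := Ω) W → (a', b') ∈ Rrel (Ω := Ω) W →
          Set.ncard {c : ∀ x, Ω x | (a, c) ∈ Rrel (Ω := Ω) Y ∧ (c, b) ∈ Rrel (Ω := Ω) Z} =
          Set.ncard {c : ∀ x, Ω x | (a', c) ∈ Rrel (Ω := Ω) Y ∧ (c, b') ∈ Rrel (Ω := Ω) Z}) :=
  generalized_wreath_product_scheme_general Ω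

end SchubertCell
end
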